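/- arXiv:0907.3666 — 11 statements merged into one kernel-verified Lean document; each statement's English description precedes it below -/
import Mathlib

section
/- Let A be an m×n real matrix and let 1 ≤ k ≤ n. Suppose that for every nonzero w ∈ ℝ^n with Aw = 0, every subset K ⊆ {1,…,n} with |K| = k, and every choice of signs s_i ∈ {−1,1} for i ∈ K, one has −Σ_{i∈K} s_i·w_i < Σ_{i∉K} |w_i|. Then for every k-sparse vector x ∈ ℝ^n, x is the unique minimizer of ‖x'‖₁ over all x' ∈ ℝ^n satisfying Ax' = Ax. -/
/-- If for every nonzero `w` in the null space of `A`, every subset `K` of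
size `k`, and every sign choice `s` on `K`, one has `-∑_{i∈K} s i * w i < ∑_{i∉K} |w i|`,
then every `k`-sparse `x` is the unique `ℓ₁` minimizer subject to `A x' = A x`. -/
theorem stmt0 (m n k : ℕ) (hk1 : 1 ≤ k) (hkn : k ≤ n)
    (A : Matrix (Fin m) (Fin n) ℝ)
    (hns : ∀ w : Fin n → ℝ, w ≠ 0 → A.mulVec w = 0 →
      ∀ K : Finset (Fin n), K.card = k →
        ∀ s : Fin n → ℝ, (∀ i ∈ K, s i = 1 ∨ s i = -1) →
          -(∑ i ∈ K, s i * w i) < ∑ i ∈ Kᶜ, |w i|) :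
    ∀ x : Fin n → ℝ, (Finset.univ.filter fun i => x i ≠ 0).card ≤ k →
      ∀ x' : Fin n → ℝ, A.mulVec x' = A.mulVec x → x' ≠ x →
        ∑ i, |x i| < ∑ i, |x' i| := by
  intro x hx x' hAx hne
  set w : Fin n → ℝ := x' - x with hw
  have hw0 : w ≠ 0 := sub_ne_zero.mpr hne
  have hAw : A.mulVec w = 0 := by
    rw [hw, Matrix.mulVec_sub, hAx, sub_self]
  -- choose K ⊇ support x with card k
  obtain ⟨K, hSK, hKcard⟩ := Finset.exists_superset_card_eq hx
    (by simpa [Fintype.card_fin] using hkn)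
  -- for i ∉ K, x i = 0
  have hx0 : ∀ i ∈ Kᶜ, x i = 0 := by
    intro i hi
    by_contra h
    exact (Finset.mem_compl.mp hi) (hSK (Finset.mem_filter.mpr ⟨Finset.mem_univ i, h⟩))
  set s : Fin n → ℝ := fun i => if x i < 0 then -1 else 1 with hs
  have hs1 : ∀ i ∈ K, s i = 1 ∨ s i = -1 := by
    intro i _
    by_cases h : x i < 0 <;> simp [hs, h]
  have hkey := hns w hw0 hAw K hKcard s hs1
  have hsx : ∀ i, s i * x i = |x i| := by
    intro i
    by_cases h : x i < 0
    · simp [hs, h, abs_of_neg h]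
    · simp [hs, h, abs_of_nonneg (not_lt.mp h)]
  have hsx' : ∀ i, s i * x' i ≤ |x' i| := by
    intro i
    calc s i * x' i ≤ |s i * x' i| := le_abs_self _
    _ = |x' i| := by
        rw [abs_mul]
        by_cases h : x i < 0 <;> simp [hs, h]
  have hsplit : ∑ i, |x i| = ∑ i ∈ K, |x i| := by
    rw [← Finset.sum_add_sum_compl K]
    have : ∑ i ∈ Kᶜ, |x i| = 0 :=
      Finset.sum_eq_zero fun i hi => by rw [hx0 i hi, abs_zero]
    rw [this, add_zero]
  have hsplit' : ∑ i, |x' i| = ∑ i ∈ K, |x' i| + ∑ i ∈ Kᶜ, |w i| := by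
    rw [← Finset.sum_add_sum_compl K]
    congr 1
    refine Finset.sum_congr rfl fun i hi => ?_
    rw [hw]
    simp [hx0 i hi]
  have hKsum : ∑ i ∈ K, |x i| + ∑ i ∈ K, s i * w i ≤ ∑ i ∈ K, |x' i| := by
    have : ∀ i ∈ K, |x i| + s i * w i ≤ |x' i| := by
      intro i _
      have : s i * x' i = |x i| + s i * w i := by
        rw [← hsx i, hw]
        simp only [Pi.sub_apply]
        ring
      rw [← this]
      exact hsx' i
    calc ∑ i ∈ K, |x i| + ∑ i ∈ K, s i * w i = ∑ i ∈ K, (|x i| + s i * w i) := by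
          rw [Finset.sum_add_distrib]
      _ ≤ ∑ i ∈ K, |x' i| := Finset.sum_le_sum this
  rw [hsplit, hsplit']
  have : 0 < ∑ i ∈ K, s i * w i + ∑ i ∈ Kᶜ, |w i| := by linarith
  linarith
end

section
/- Let A be an m×n real matrix and let 1 ≤ k ≤ n. Suppose that for every w ∈ ℝ^n with Aw = 0 one has Σ_{i=n−k+1}^n w̃_i ≤ Σ_{i=1}^{n−k} w̃_i, i.e. the sum of the k largest magnitudes of the components of w is at most the sum of the remaining n−k magnitudes. Then for every k-sparse vector x ∈ ℝ^n and every x' ∈ ℝ^n with Ax' = Ax, one has ‖x‖₁ ≤ ‖x'‖₁; that is, x attains the minimum of the ℓ1-minimization problem. -/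
/-- `sortedAbs h` is the vector of magnitudes `|h i|` sorted in nondecreasing order. -/
noncomputable def sortedAbs {n : ℕ} (h : Fin n → ℝ) : Fin n → ℝ :=
  (fun i => |h i|) ∘ Tuple.sort (fun i => |h i|)

private lemma le_apply_aux {t n : ℕ} {f : Fin t → Fin n} (hf : StrictMono f) (j : Fin t) :
    (j : ℕ) ≤ (f j : ℕ) := by
  obtain ⟨jv, hj⟩ := j
  induction jv with
  | zero => simp
  | succ i ih =>
    have hi : i < t := by omega
    have h1 : (⟨i, hi⟩ : Fin t) < ⟨i + 1, hj⟩ := by simp [Fin.lt_def]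
    have h2 := hf h1
    have h3 := ih hi
    have h4 : (f ⟨i, hi⟩ : ℕ) < (f ⟨i + 1, hj⟩ : ℕ) := h2
    simp only [Fin.val_mk] at h3 h4 ⊢
    omega

private lemma apply_le_aux {t n : ℕ} {f : Fin t → Fin n} (hf : StrictMono f) (j : Fin t) :
    (f j : ℕ) ≤ n - t + (j : ℕ) := by
  have h2 : StrictMono (fun j : Fin t => (f j.rev).rev) := by
    intro a b hab
    exact Fin.rev_lt_rev.mpr (hf (Fin.rev_lt_rev.mpr hab))
  have h3 := le_apply_aux h2 j.rev
  simp only [Fin.rev_rev, Fin.val_rev] at h3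
  have := j.isLt
  have := (f j).isLt
  omega

/-- Sum over any set of card ≤ k of a nonneg monotone function is at most the top-k sum. -/
private lemma sum_le_topk {n k : ℕ} (hkn : k ≤ n) (g : Fin n → ℝ) (hg : Monotone g)
    (hg0 : ∀ i, 0 ≤ g i) (T : Finset (Fin n)) (hT : T.card ≤ k) :
    ∑ i ∈ T, g i ≤ ∑ i ∈ Finset.univ.filter (fun i : Fin n => n - k ≤ (i : ℕ)), g i := by
  set t := T.card with ht
  have emb := T.orderEmbOfFin ht.symm
  have hsum : ∑ i ∈ T, g i = ∑ j : Fin t, g (T.orderEmbOfFin ht.symm j) := by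
    refine (Finset.sum_bij (fun (j : Fin t) _ => T.orderEmbOfFin ht.symm j)
      (fun j _ => T.orderEmbOfFin_mem ht.symm j) ?_ ?_ (fun _ _ => rfl)).symm
    · intro a _ b _ hab
      exact (T.orderEmbOfFin ht.symm).injective hab
    · intro b hb
      have : b ∈ Set.range (T.orderEmbOfFin ht.symm) := by
        rw [Finset.range_orderEmbOfFin]; exact hb
      obtain ⟨j, hj⟩ := this
      exact ⟨j, Finset.mem_univ j, hj⟩
  rw [hsum]
  have key : ∀ j : Fin t, g (T.orderEmbOfFin ht.symm j) ≤
      g ⟨n - t + (j : ℕ), by omega⟩ := by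
    intro j
    apply hg
    have := apply_le_aux (T.orderEmbOfFin ht.symm).strictMono j
    exact this
  calc ∑ j : Fin t, g (T.orderEmbOfFin ht.symm j)
      ≤ ∑ j : Fin t, g ⟨n - t + (j : ℕ), by omega⟩ := Finset.sum_le_sum fun j _ => key j
    _ = ∑ i ∈ Finset.univ.filter (fun i : Fin n => n - t ≤ (i : ℕ)), g i := by
        refine Finset.sum_bij' (fun (j : Fin t) _ => (⟨n - t + (j : ℕ), by omega⟩ : Fin n))
          (fun (i : Fin n) hi => (⟨(i : ℕ) - (n - t), by
            simp only [Finset.mem_filter] at hi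
            have := i.isLt; omega⟩ : Fin t)) ?_ ?_ ?_ ?_ ?_
        · intro j _; simp; omega
        · intro i hi; simp only [Finset.mem_filter] at hi; simp
        · intro j _; ext; simp
        · intro i hi; simp only [Finset.mem_filter] at hi; ext; simp; omega
        · intro j _; rfl
    _ ≤ ∑ i ∈ Finset.univ.filter (fun i : Fin n => n - k ≤ (i : ℕ)), g i := by
        apply Finset.sum_le_sum_of_subset_of_nonneg
        · intro i hi
          simp only [Finset.mem_filter] at hi ⊢
          exact ⟨hi.1, by omega⟩
        · intro i _ _; exact hg0 i

/-- If for every `w` in the null space of `A` the sum of the `k` largest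
magnitudes of `w` is at most the sum of the remaining `n - k` magnitudes, then every
`k`-sparse `x` attains the minimum of the `ℓ₁`-minimization problem. -/
theorem stmt1 (m n k : ℕ) (hk1 : 1 ≤ k) (hkn : k ≤ n)
    (A : Matrix (Fin m) (Fin n) ℝ)
    (hns : ∀ w : Fin n → ℝ, A.mulVec w = 0 →
      ∑ i ∈ Finset.univ.filter (fun i : Fin n => n - k ≤ (i : ℕ)), sortedAbs w i ≤
        ∑ i ∈ Finset.univ.filter (fun i : Fin n => (i : ℕ) < n - k), sortedAbs w i) :
    ∀ x : Fin n → ℝ, (Finset.univ.filter fun i => x i ≠ 0).card ≤ k →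
      ∀ x' : Fin n → ℝ, A.mulVec x' = A.mulVec x →
        ∑ i, |x i| ≤ ∑ i, |x' i| := by
  intro x hx x' hAx
  set w : Fin n → ℝ := x' - x with hw
  have hAw : A.mulVec w = 0 := by
    rw [hw, Matrix.mulVec_sub, hAx, sub_self]
  set S : Finset (Fin n) := Finset.univ.filter fun i => x i ≠ 0 with hS
  set σ : Equiv.Perm (Fin n) := Tuple.sort (fun i => |w i|) with hσ
  -- sortedAbs w is monotone and nonneg
  have hmono : Monotone (sortedAbs w) := Tuple.monotone_sort (fun i => |w i|)
  have hnonneg : ∀ i, 0 ≤ sortedAbs w i := fun i => abs_nonneg _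
  -- total sum of sortedAbs equals ∑ |w i|
  have htotal : ∑ i, sortedAbs w i = ∑ i, |w i| := by
    exact Equiv.sum_comp σ (fun i => |w i|)
  -- sum over S of |w| equals sum over T of sortedAbs, T = image of S under σ⁻¹
  set T : Finset (Fin n) := S.map σ.symm.toEmbedding with hT
  have hTcard : T.card ≤ k := by rw [hT, Finset.card_map]; exact hx
  have hTsum : ∑ i ∈ T, sortedAbs w i = ∑ i ∈ S, |w i| := by
    rw [hT, Finset.sum_map]
    apply Finset.sum_congr rfl
    intro i _
    simp [sortedAbs, hσ]
  -- key inequality: ∑_S |w| ≤ top-k sum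
  have hkey : ∑ i ∈ S, |w i| ≤
      ∑ i ∈ Finset.univ.filter (fun i : Fin n => n - k ≤ (i : ℕ)), sortedAbs w i := by
    rw [← hTsum]
    exact sum_le_topk hkn (sortedAbs w) hmono hnonneg T hTcard
  -- top + bottom = total
  have hsplit : ∑ i ∈ Finset.univ.filter (fun i : Fin n => (i : ℕ) < n - k), sortedAbs w i +
      ∑ i ∈ Finset.univ.filter (fun i : Fin n => n - k ≤ (i : ℕ)), sortedAbs w i
      = ∑ i, sortedAbs w i := by
    rw [← Finset.sum_filter_add_sum_filter_not Finset.univ (fun i : Fin n => (i : ℕ) < n - k)]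
    congr 1
    apply Finset.sum_congr _ (fun _ _ => rfl)
    apply Finset.filter_congr
    intro i _
    simp [Nat.not_lt]
  -- ∑_S |w| ≤ ∑_{Sᶜ} |w|
  have hSc : ∑ i ∈ S, |w i| ≤ ∑ i ∈ Sᶜ, |w i| := by
    have h1 := hns w hAw
    have h2 : ∑ i ∈ S, |w i| + ∑ i ∈ Sᶜ, |w i| = ∑ i, |w i| := by
      rw [Finset.sum_add_sum_compl]
    have h3 : ∑ i ∈ S, |w i| ≤
        ∑ i ∈ Finset.univ.filter (fun i : Fin n => (i : ℕ) < n - k), sortedAbs w i :=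
      le_trans hkey h1
    -- ∑ Sᶜ = total - ∑ S ≥ total - top = bottom ≥ top ≥ ∑ S
    have h4 : ∑ i ∈ Finset.univ.filter (fun i : Fin n => n - k ≤ (i : ℕ)), sortedAbs w i +
        ∑ i ∈ S, |w i| ≤ ∑ i, |w i| := by
      rw [← htotal, ← hsplit]
      linarith [hkey, h1]
    linarith [hkey, h2, h4]
  -- conclude
  have hdecomp : ∑ i, |x i| = ∑ i ∈ S, |x i| := by
    rw [Finset.sum_filter_of_ne]
    intro i _ hne
    intro hxi
    exact hne (by rw [hxi]; simp)
  have hconc : ∑ i ∈ S, |x i| ≤ ∑ i ∈ S, |x' i| + ∑ i ∈ S, |w i| := by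
    rw [← Finset.sum_add_distrib]
    apply Finset.sum_le_sum
    intro i _
    have : x i = x' i - w i := by rw [hw]; simp
    rw [this]
    exact le_trans (abs_sub _ _) (le_refl _)
  have hScw : ∀ i ∈ Sᶜ, |w i| = |x' i| := by
    intro i hi
    rw [hS] at hi
    simp only [Finset.mem_compl, Finset.mem_filter, Finset.mem_univ, true_and, not_not] at hi
    rw [hw]
    simp [hi]
  calc ∑ i, |x i| = ∑ i ∈ S, |x i| := hdecomp
    _ ≤ ∑ i ∈ S, |x' i| + ∑ i ∈ S, |w i| := hconc
    _ ≤ ∑ i ∈ S, |x' i| + ∑ i ∈ Sᶜ, |w i| := by linarith [hSc]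
    _ = ∑ i ∈ S, |x' i| + ∑ i ∈ Sᶜ, |x' i| := by
        congr 1; exact Finset.sum_congr rfl hScw
    _ = ∑ i, |x' i| := Finset.sum_add_sum_compl S _
end

section
/- Let A be an m×n real matrix and let 1 ≤ k < n. Suppose that for every nonzero w ∈ ℝ^n with Aw = 0 one has Σ_{i=n−k+1}^n w_i < Σ_{i=1}^{n−k} |w_i|. Then every vector x ∈ ℝ^n with x_i = 0 for 1 ≤ i ≤ n−k and x_i ≤ 0 for n−k+1 ≤ i ≤ n is the unique minimizer of ‖x'‖₁ over all x' ∈ ℝ^n with Ax' = Ax. -/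
/-- If for every nonzero `w` in the null space of `A` one has
`∑_{i=n-k+1}^n w i < ∑_{i=1}^{n-k} |w i|`, then every `x` vanishing on the first `n - k`
coordinates and nonpositive on the last `k` coordinates is the unique `ℓ₁` minimizer
subject to `A x' = A x`. -/
theorem stmt2 (m n k : ℕ) (hk1 : 1 ≤ k) (hkn : k < n)
    (A : Matrix (Fin m) (Fin n) ℝ)
    (hns : ∀ w : Fin n → ℝ, w ≠ 0 → A.mulVec w = 0 →
      ∑ i ∈ Finset.univ.filter (fun i : Fin n => n - k ≤ (i : ℕ)), w i <
        ∑ i ∈ Finset.univ.filter (fun i : Fin n => (i : ℕ) < n - k), |w i|) :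
    ∀ x : Fin n → ℝ, (∀ i : Fin n, (i : ℕ) < n - k → x i = 0) →
      (∀ i : Fin n, n - k ≤ (i : ℕ) → x i ≤ 0) →
      ∀ x' : Fin n → ℝ, A.mulVec x' = A.mulVec x → x' ≠ x →
        ∑ i, |x i| < ∑ i, |x' i| := by
  intro x hx0 hxneg x' hAx hne
  set w : Fin n → ℝ := x' - x with hw
  have hw0 : w ≠ 0 := sub_ne_zero.mpr hne
  have hAw : A.mulVec w = 0 := by
    rw [hw, Matrix.mulVec_sub, hAx, sub_self]
  have key := hns w hw0 hAw
  have hsplit : ∀ f : Fin n → ℝ, ∑ i, f i =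
      ∑ i ∈ Finset.univ.filter (fun i : Fin n => (i:ℕ) < n - k), f i +
      ∑ i ∈ Finset.univ.filter (fun i : Fin n => n - k ≤ (i:ℕ)), f i := by
    intro f
    rw [← Finset.sum_filter_add_sum_filter_not Finset.univ
      (fun i : Fin n => (i:ℕ) < n - k) f]
    congr 1
    apply Finset.sum_congr
    · apply Finset.filter_congr
      intro i _
      simp [not_lt]
    · intros; rfl
  rw [hsplit (fun i => |x i|), hsplit (fun i => |x' i|)]
  have h1 : ∑ i ∈ Finset.univ.filter (fun i : Fin n => (i:ℕ) < n - k), |x i| = 0 := by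
    apply Finset.sum_eq_zero
    intro i hi
    simp only [Finset.mem_filter] at hi
    rw [hx0 i hi.2, abs_zero]
  have h2 : ∑ i ∈ Finset.univ.filter (fun i : Fin n => (i:ℕ) < n - k), |x' i| =
      ∑ i ∈ Finset.univ.filter (fun i : Fin n => (i:ℕ) < n - k), |w i| := by
    apply Finset.sum_congr rfl
    intro i hi
    simp only [Finset.mem_filter] at hi
    simp [hw, hx0 i hi.2]
  have h3 : ∑ i ∈ Finset.univ.filter (fun i : Fin n => n - k ≤ (i:ℕ)), (|x i| - w i) ≤
      ∑ i ∈ Finset.univ.filter (fun i : Fin n => n - k ≤ (i:ℕ)), |x' i| := by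
    apply Finset.sum_le_sum
    intro i hi
    simp only [Finset.mem_filter] at hi
    have hx := hxneg i hi.2
    have hwi : w i = x' i - x i := rfl
    rw [abs_of_nonpos hx, hwi]
    have : -(x' i) ≤ |x' i| := neg_le_abs _
    linarith
  rw [Finset.sum_sub_distrib] at h3
  linarith
end

section
/- Let A be an m×n real matrix and let 1 ≤ k < n. Suppose that for every nonzero w ∈ ℝ^n with Aw = 0 one has Σ_{i=n−k+1}^n |w_i| < Σ_{i=1}^{n−k} |w_i|. Then every vector x ∈ ℝ^n with x_i = 0 for 1 ≤ i ≤ n−k (i.e. every vector supported on the last k coordinates, with arbitrary signs there) is the unique minimizer of ‖x'‖₁ over all x' ∈ ℝ^n with Ax' = Ax. -/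
/-- If for every nonzero `w` in the null space of `A` one has
`∑_{i=n-k+1}^n |w i| < ∑_{i=1}^{n-k} |w i|`, then every `x` vanishing on the first `n - k`
coordinates (arbitrary signs on the last `k`) is the unique `ℓ₁` minimizer subject to
`A x' = A x`. -/
theorem stmt3 (m n k : ℕ) (hk1 : 1 ≤ k) (hkn : k < n)
    (A : Matrix (Fin m) (Fin n) ℝ)
    (hns : ∀ w : Fin n → ℝ, w ≠ 0 → A.mulVec w = 0 →
      ∑ i ∈ Finset.univ.filter (fun i : Fin n => n - k ≤ (i : ℕ)), |w i| <
        ∑ i ∈ Finset.univ.filter (fun i : Fin n => (i : ℕ) < n - k), |w i|) :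
    ∀ x : Fin n → ℝ, (∀ i : Fin n, (i : ℕ) < n - k → x i = 0) →
      ∀ x' : Fin n → ℝ, A.mulVec x' = A.mulVec x → x' ≠ x →
        ∑ i, |x i| < ∑ i, |x' i| := by
  intro x hx x' hAx hne
  set w : Fin n → ℝ := x' - x with hw
  have hw0 : w ≠ 0 := sub_ne_zero.mpr hne
  have hAw : A.mulVec w = 0 := by
    simp [hw, Matrix.mulVec_sub, hAx]
  have key := hns w hw0 hAw
  set T := Finset.univ.filter (fun i : Fin n => (i : ℕ) < n - k) with hT
  set S := Finset.univ.filter (fun i : Fin n => n - k ≤ (i : ℕ)) with hS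
  have hsplit : ∀ f : Fin n → ℝ, ∑ i, f i = ∑ i ∈ T, f i + ∑ i ∈ S, f i := by
    intro f
    rw [hT, hS, ← Finset.sum_filter_add_sum_filter_not Finset.univ
      (fun i : Fin n => (i : ℕ) < n - k) f]
    congr 1
    apply Finset.sum_congr _ (fun _ _ => rfl)
    ext i; simp [not_lt]
  rw [hsplit (fun i => |x i|), hsplit (fun i => |x' i|)]
  have h1 : ∑ i ∈ T, |x i| = 0 := by
    apply Finset.sum_eq_zero; intro i hi
    rw [hT] at hi; simp only [Finset.mem_filter] at hi
    rw [hx i hi.2]; simp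
  have h2 : ∑ i ∈ T, |x' i| = ∑ i ∈ T, |w i| := by
    apply Finset.sum_congr rfl; intro i hi
    rw [hT] at hi; simp only [Finset.mem_filter] at hi
    simp [hw, hx i hi.2]
  have h3 : ∑ i ∈ S, (|x i| - |w i|) ≤ ∑ i ∈ S, |x' i| := by
    apply Finset.sum_le_sum; intro i _
    have : |x i| ≤ |x' i| + |w i| := by
      have h := abs_add_le (x' i) (-(w i))
      simp only [hw, Pi.sub_apply] at h ⊢
      have : x' i + -(x' i - x i) = x i := by ring
      rw [this] at h
      rw [abs_neg] at h; simpa using h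
    linarith
  rw [Finset.sum_sub_distrib] at h3
  rw [h1, h2]
  linarith
end

section
/- Let A be an m×n real matrix and let 1 ≤ k ≤ n. Suppose that for every subset K ⊆ {1,…,n} with |K| = k and every nonzero w ∈ ℝ^n with Aw = 0 and w_i ≥ 0 for all i ∉ K, one has −Σ_{i∈K} w_i < Σ_{i∉K} w_i. Then every k-sparse vector x ∈ ℝ^n with x_i ≥ 0 for all i is the unique minimizer of ‖x'‖₁ over all x' ∈ ℝ^n satisfying Ax' = Ax and x'_i ≥ 0 for all i. -/
/-- If for every subset `K` of size `k` and every nonzero `w` in the null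
space of `A` that is nonnegative off `K`, one has `-∑_{i∈K} w i < ∑_{i∉K} w i`, then every
`k`-sparse nonnegative `x` is the unique minimizer of the nonnegativity-constrained
`ℓ₁`-minimization problem. -/
theorem stmt4 (m n k : ℕ) (hk1 : 1 ≤ k) (hkn : k ≤ n)
    (A : Matrix (Fin m) (Fin n) ℝ)
    (hns : ∀ K : Finset (Fin n), K.card = k →
      ∀ w : Fin n → ℝ, w ≠ 0 → A.mulVec w = 0 → (∀ i ∉ K, 0 ≤ w i) →
        -(∑ i ∈ K, w i) < ∑ i ∈ Kᶜ, w i) :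
    ∀ x : Fin n → ℝ, (Finset.univ.filter fun i => x i ≠ 0).card ≤ k →
      (∀ i, 0 ≤ x i) →
      ∀ x' : Fin n → ℝ, A.mulVec x' = A.mulVec x → (∀ i, 0 ≤ x' i) → x' ≠ x →
        ∑ i, |x i| < ∑ i, |x' i| := by
  intro x hxc hx0 x' hAx hx'0 hne
  obtain ⟨K, hKsub, hKcard⟩ := Finset.exists_superset_card_eq hxc
    (by simpa using hkn)
  set w : Fin n → ℝ := fun i => x' i - x i with hw
  have hwne : w ≠ 0 := by
    intro h
    apply hne
    funext i
    have := congrFun h i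
    simp [hw] at this
    linarith
  have hAw : A.mulVec w = 0 := by
    have : w = x' - x := rfl
    rw [this, Matrix.mulVec_sub, hAx, sub_self]
  have hwK : ∀ i ∉ K, 0 ≤ w i := by
    intro i hiK
    have hxi : x i = 0 := by
      by_contra h
      exact hiK (hKsub (by simp [h]))
    simp [hw, hxi]
    exact hx'0 i
  have hlt := hns K hKcard w hwne hAw hwK
  have hsum : 0 < ∑ i, w i := by
    have := Finset.sum_add_sum_compl K w
    linarith
  have h1 : ∑ i, |x i| = ∑ i, x i := by
    exact Finset.sum_congr rfl fun i _ => abs_of_nonneg (hx0 i)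
  have h2 : ∑ i, |x' i| = ∑ i, x' i := by
    exact Finset.sum_congr rfl fun i _ => abs_of_nonneg (hx'0 i)
  have : ∑ i, w i = ∑ i, x' i - ∑ i, x i := by
    simp [hw, Finset.sum_sub_distrib]
  rw [h1, h2]; linarith
end

section
/- Let A be an m×n real matrix and let 1 ≤ k < n. Suppose that for every nonzero w ∈ ℝ^n with Aw = 0 and w_i ≥ 0 for all 1 ≤ i ≤ n−k, one has −Σ_{i=n−k+1}^n w_i < Σ_{i=1}^{n−k} w_i. Then every vector x ∈ ℝ^n with x_i = 0 for 1 ≤ i ≤ n−k and x_i ≥ 0 for n−k+1 ≤ i ≤ n is the unique minimizer of ‖x'‖₁ over all x' ∈ ℝ^n satisfying Ax' = Ax and x'_i ≥ 0 for all i. -/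
/-- If for every nonzero `w` in the null space of `A` with `w i ≥ 0` on the
first `n - k` coordinates one has `-∑_{i=n-k+1}^n w i < ∑_{i=1}^{n-k} w i`, then every `x`
vanishing on the first `n - k` coordinates and nonnegative on the last `k` is the unique
minimizer of the nonnegativity-constrained `ℓ₁`-minimization problem. -/
theorem stmt5 (m n k : ℕ) (hk1 : 1 ≤ k) (hkn : k < n)
    (A : Matrix (Fin m) (Fin n) ℝ)
    (hns : ∀ w : Fin n → ℝ, w ≠ 0 → A.mulVec w = 0 →
      (∀ i : Fin n, (i : ℕ) < n - k → 0 ≤ w i) →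
      -(∑ i ∈ Finset.univ.filter (fun i : Fin n => n - k ≤ (i : ℕ)), w i) <
        ∑ i ∈ Finset.univ.filter (fun i : Fin n => (i : ℕ) < n - k), w i) :
    ∀ x : Fin n → ℝ, (∀ i : Fin n, (i : ℕ) < n - k → x i = 0) →
      (∀ i : Fin n, n - k ≤ (i : ℕ) → 0 ≤ x i) →
      ∀ x' : Fin n → ℝ, A.mulVec x' = A.mulVec x → (∀ i, 0 ≤ x' i) → x' ≠ x →
        ∑ i, |x i| < ∑ i, |x' i| := by
  intro x hx0 hxpos x' hAx hx'pos hne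
  have hx : ∀ i, 0 ≤ x i := by
    intro i
    rcases lt_or_ge (i : ℕ) (n - k) with h | h
    · rw [hx0 i h]
    · exact hxpos i h
  set w : Fin n → ℝ := x' - x with hw
  have hwne : w ≠ 0 := sub_ne_zero.mpr hne
  have hwnull : A.mulVec w = 0 := by
    rw [hw, Matrix.mulVec_sub, hAx, sub_self]
  have hwpos : ∀ i : Fin n, (i : ℕ) < n - k → 0 ≤ w i := by
    intro i hi
    simp only [hw, Pi.sub_apply, hx0 i hi, sub_zero]
    exact hx'pos i
  have key := hns w hwne hwnull hwpos
  have hsum : 0 < ∑ i, w i := by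
    have hsplit := Finset.sum_filter_add_sum_filter_not Finset.univ
      (fun i : Fin n => (i : ℕ) < n - k) w
    have hcongr : Finset.univ.filter (fun i : Fin n => ¬ (i : ℕ) < n - k)
        = Finset.univ.filter (fun i : Fin n => n - k ≤ (i : ℕ)) := by
      simp [not_lt]
    rw [hcongr] at hsplit
    linarith
  have hwsum : ∑ i, w i = ∑ i, x' i - ∑ i, x i := by
    simp [hw, Finset.sum_sub_distrib]
  calc ∑ i, |x i| = ∑ i, x i := by
        exact Finset.sum_congr rfl fun i _ => abs_of_nonneg (hx i)
    _ < ∑ i, x' i := by linarith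
    _ = ∑ i, |x' i| := by
        exact (Finset.sum_congr rfl fun i _ => (abs_of_nonneg (hx'pos i))).symm
end

section
/- Let 1 ≤ k < n and let h ∈ ℝ^n. Then sup_{w ∈ S_s} hᵀw = max{ Σ_{i=1}^n h̃_i y_i : y ∈ ℝ^n, y_i ≥ 0 for all i, Σ_{i=n−k+1}^n y_i ≥ Σ_{i=1}^{n−k} y_i, and Σ_{i=1}^n y_i² ≤ 1 }. -/
lemma sortedAbs_nonneg {n : ℕ} (h : Fin n → ℝ) (i : Fin n) : 0 ≤ sortedAbs h i := abs_nonneg _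

lemma sortedAbs_monotone {n : ℕ} (h : Fin n → ℝ) : Monotone (sortedAbs h) :=
  Tuple.monotone_sort _

lemma sum_sq_sortedAbs {n : ℕ} (w : Fin n → ℝ) : ∑ i, (sortedAbs w i)^2 = ∑ i, (w i)^2 := by
  calc ∑ i, (sortedAbs w i)^2 = ∑ i, (w (Tuple.sort (fun j => |w j|) i))^2 := by
        refine Finset.sum_congr rfl fun i _ => ?_
        simp [sortedAbs, sq_abs]
  _ = ∑ i, (w i)^2 := Equiv.sum_comp (Tuple.sort (fun j => |w j|)) (fun i => (w i)^2)

lemma filter_split {n m : ℕ} (y : Fin n → ℝ) :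
    ∑ i ∈ Finset.univ.filter (fun i : Fin n => m ≤ (i:ℕ)), y i
      = ∑ i, y i - ∑ i ∈ Finset.univ.filter (fun i : Fin n => (i:ℕ) < m), y i := by
  have h := Finset.sum_filter_add_sum_filter_not Finset.univ (fun i : Fin n => (i:ℕ) < m) y
  have hfe : Finset.univ.filter (fun i : Fin n => ¬ (i:ℕ) < m)
      = Finset.univ.filter (fun i : Fin n => m ≤ (i:ℕ)) := by
    apply Finset.filter_congr; intro i _; simp [not_lt]
  rw [hfe] at h
  linarith

lemma sorted_bottom_le {n m : ℕ} (y : Fin n → ℝ) :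
    ∑ i ∈ Finset.univ.filter (fun i : Fin n => (i:ℕ) < m), y (Tuple.sort y i) ≤
      ∑ i ∈ Finset.univ.filter (fun i : Fin n => (i:ℕ) < m), y i := by
  set c : Fin n → ℝ := fun i => if (i:ℕ) < m then 1 else 0 with hc
  have hcanti : Antitone c := by
    intro i j hij
    dsimp only [c]
    have hij' : (i:ℕ) ≤ (j:ℕ) := hij
    split_ifs with h1 h2
    · exact le_refl _
    · exact absurd (lt_of_le_of_lt hij' h1) h2
    · norm_num
    · exact le_refl _
  have hg : Monotone (y ∘ Tuple.sort y) := Tuple.monotone_sort y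
  have hav : Antivary c (y ∘ Tuple.sort y) := hcanti.antivary hg
  have key := hav.sum_mul_le_sum_mul_comp_perm (σ := (Tuple.sort y)⁻¹)
  have h1 : ∑ i ∈ Finset.univ.filter (fun i : Fin n => (i:ℕ) < m), y (Tuple.sort y i)
      = ∑ i, c i * (y ∘ Tuple.sort y) i := by
    rw [Finset.sum_filter]
    refine Finset.sum_congr rfl fun i _ => ?_
    by_cases hi : (i:ℕ) < m <;> simp [c, hi]
  have h2 : ∑ i ∈ Finset.univ.filter (fun i : Fin n => (i:ℕ) < m), y i
      = ∑ i, c i * (y ∘ Tuple.sort y) ((Tuple.sort y)⁻¹ i) := by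
    rw [Finset.sum_filter]
    refine Finset.sum_congr rfl fun i _ => ?_
    by_cases hi : (i:ℕ) < m <;> simp [c, hi]
  rw [h1, h2]
  exact key


/-- The set `S_s`: vectors on the unit Euclidean sphere of `ℝ^n` such that the sum of the
`k` largest magnitudes is at least the sum of the remaining `n - k` magnitudes. -/
def Ss (n k : ℕ) : Set (Fin n → ℝ) :=
  {w | (∑ i, (w i) ^ 2 = 1) ∧
    ∑ i ∈ Finset.univ.filter (fun i : Fin n => (i : ℕ) < n - k), sortedAbs w i ≤
      ∑ i ∈ Finset.univ.filter (fun i : Fin n => n - k ≤ (i : ℕ)), sortedAbs w i}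

/-- `sup_{w ∈ S_s} hᵀw` equals the maximum of `∑ i, h̃ i * y i` over
`y` with nonnegative entries, `∑_{top k} y ≥ ∑_{bottom n-k} y`, and `∑ y_i² ≤ 1`;
in particular this maximum is attained. -/
theorem stmt7 (n k : ℕ) (hk1 : 1 ≤ k) (hkn : k < n) (h : Fin n → ℝ) :
    IsGreatest
      {v : ℝ | ∃ y : Fin n → ℝ, (∀ i, 0 ≤ y i) ∧
        (∑ i ∈ Finset.univ.filter (fun i : Fin n => (i : ℕ) < n - k), y i ≤
          ∑ i ∈ Finset.univ.filter (fun i : Fin n => n - k ≤ (i : ℕ)), y i) ∧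
        (∑ i, (y i) ^ 2 ≤ 1) ∧ v = ∑ i, sortedAbs h i * y i}
      (sSup {v : ℝ | ∃ w ∈ Ss n k, v = ∑ i, h i * w i}) := by
  classical
  set σ := Tuple.sort (fun i => |h i|) with hσdef
  have ha_def : ∀ i, sortedAbs h i = |h (σ i)| := fun i => rfl
  have ha_nonneg : ∀ i, 0 ≤ sortedAbs h i := fun i => abs_nonneg _
  set K : Set (Fin n → ℝ) := {y | (∀ i, 0 ≤ y i) ∧
    (∑ i ∈ Finset.univ.filter (fun i : Fin n => (i : ℕ) < n - k), y i ≤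
      ∑ i ∈ Finset.univ.filter (fun i : Fin n => n - k ≤ (i : ℕ)), y i) ∧
    ∑ i, (y i)^2 ≤ 1} with hKdef
  set f : (Fin n → ℝ) → ℝ := fun y => ∑ i, sortedAbs h i * y i with hfdef
  -- K is compact
  have hKclosed : IsClosed K := by
    have h1 : IsClosed {y : Fin n → ℝ | ∀ i, 0 ≤ y i} := by
      have : {y : Fin n → ℝ | ∀ i, 0 ≤ y i} = ⋂ i, {y | 0 ≤ y i} := by
        ext y; simp [Set.mem_iInter]
      rw [this]
      exact isClosed_iInter fun i => isClosed_le continuous_const (continuous_apply i)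
    have h2 : IsClosed {y : Fin n → ℝ |
        ∑ i ∈ Finset.univ.filter (fun i : Fin n => (i : ℕ) < n - k), y i ≤
          ∑ i ∈ Finset.univ.filter (fun i : Fin n => n - k ≤ (i : ℕ)), y i} :=
      isClosed_le (continuous_finset_sum _ fun i _ => continuous_apply i)
        (continuous_finset_sum _ fun i _ => continuous_apply i)
    have h3 : IsClosed {y : Fin n → ℝ | ∑ i, (y i)^2 ≤ 1} :=
      isClosed_le (continuous_finset_sum _ fun i _ => (continuous_apply i).pow 2)
        continuous_const
    have : K = {y : Fin n → ℝ | ∀ i, 0 ≤ y i} ∩ ({y : Fin n → ℝ |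
        ∑ i ∈ Finset.univ.filter (fun i : Fin n => (i : ℕ) < n - k), y i ≤
          ∑ i ∈ Finset.univ.filter (fun i : Fin n => n - k ≤ (i : ℕ)), y i} ∩
        {y : Fin n → ℝ | ∑ i, (y i)^2 ≤ 1}) := by
      ext y; simp [hKdef, Set.mem_setOf_eq, and_assoc]
    rw [this]
    exact h1.inter (h2.inter h3)
  have hKsub : K ⊆ Set.Icc (0 : Fin n → ℝ) 1 := by
    intro y hy
    constructor
    · intro i; exact hy.1 i
    · intro i
      have h1 : (y i)^2 ≤ ∑ j, (y j)^2 :=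
        Finset.single_le_sum (fun j _ => sq_nonneg (y j)) (Finset.mem_univ i)
      have h2 := hy.2.2
      show y i ≤ 1
      nlinarith [hy.1 i]
  have hKcpt : IsCompact K := IsCompact.of_isClosed_subset isCompact_Icc hKclosed hKsub
  -- special element e
  have hn1 : n - 1 < n := by omega
  set i0 : Fin n := ⟨n - 1, hn1⟩ with hi0
  set e : Fin n → ℝ := fun i => if i = i0 then 1 else 0 with hedef
  have he_nonneg : ∀ i, 0 ≤ e i := by
    intro i; dsimp only [e]; split_ifs <;> norm_num
  have he_sq : ∑ i, (e i)^2 = 1 := by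
    have h1 : ∀ i, (e i)^2 = if i = i0 then (1:ℝ) else 0 := by
      intro i; by_cases hi : i = i0 <;> simp [hedef, hi]
    rw [Finset.sum_congr rfl (fun i _ => h1 i),
      Finset.sum_ite_eq' Finset.univ i0 (fun _ => (1:ℝ))]
    simp
  have he_bot : ∑ i ∈ Finset.univ.filter (fun i : Fin n => (i : ℕ) < n - k), e i = 0 := by
    apply Finset.sum_eq_zero
    intro i hi
    rw [Finset.mem_filter] at hi
    have : i ≠ i0 := by
      intro hii
      subst hii
      simp [hi0] at hi
      omega
    simp [hedef, this]
  have he_mem : e ∈ K := by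
    refine ⟨he_nonneg, ?_, le_of_eq he_sq⟩
    rw [he_bot]
    exact Finset.sum_nonneg fun i _ => he_nonneg i
  -- maximizer
  have hfcont : Continuous f := continuous_finset_sum _ fun i _ =>
    continuous_const.mul (continuous_apply i)
  obtain ⟨ystar, hyK, hymax⟩ := hKcpt.exists_isMaxOn ⟨e, he_mem⟩ hfcont.continuousOn
  have hfe_nonneg : 0 ≤ f e :=
    Finset.sum_nonneg fun i _ => mul_nonneg (ha_nonneg i) (he_nonneg i)
  have hM0 : 0 ≤ f ystar := le_trans hfe_nonneg (hymax he_mem)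
  -- normalized maximizer
  obtain ⟨y1, hy1K, hy1sq, hy1f⟩ :
      ∃ y1, y1 ∈ K ∧ ∑ i, (y1 i)^2 = 1 ∧ f y1 = f ystar := by
    by_cases hS : ∑ i, (ystar i)^2 = 1
    · exact ⟨ystar, hyK, hS, rfl⟩
    · have hSlt : ∑ i, (ystar i)^2 < 1 := lt_of_le_of_ne hyK.2.2 hS
      have hMle : f ystar ≤ 0 := by
        by_contra hpos
        push_neg at hpos
        set S := ∑ i, (ystar i)^2 with hSdef
        have hSpos : 0 < S := by
          rcases lt_or_ge 0 S with h' | h'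
          · exact h'
          · exfalso
            have hS0 : S = 0 :=
              le_antisymm h' (Finset.sum_nonneg fun i _ => sq_nonneg _)
            have hz : ∀ i, ystar i = 0 := by
              intro i
              have := (Finset.sum_eq_zero_iff_of_nonneg
                (fun j _ => sq_nonneg (ystar j))).mp hS0 i (Finset.mem_univ i)
              exact pow_eq_zero_iff two_ne_zero |>.mp this
            have hfz : f ystar = 0 := by
              rw [hfdef]
              apply Finset.sum_eq_zero
              intro i _
              rw [hz i, mul_zero]
            linarith
        set t := (Real.sqrt S)⁻¹ with htdef
        have hsq : Real.sqrt S ^ 2 = S := Real.sq_sqrt hSpos.le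
        have hsqrtpos : 0 < Real.sqrt S := Real.sqrt_pos.mpr hSpos
        have hsqrtlt : Real.sqrt S < 1 := by nlinarith
        have htpos : 0 < t := inv_pos.mpr hsqrtpos
        have htmul : t * Real.sqrt S = 1 := inv_mul_cancel₀ hsqrtpos.ne'
        have ht1 : 1 < t := by nlinarith
        have hmem : (fun i => t * ystar i) ∈ K := by
          refine ⟨fun i => mul_nonneg htpos.le (hyK.1 i), ?_, ?_⟩
          · rw [← Finset.mul_sum, ← Finset.mul_sum]
            exact mul_le_mul_of_nonneg_left hyK.2.1 htpos.le
          · have h1 : ∑ i, (t * ystar i)^2 = t^2 * S := by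
              rw [hSdef, Finset.mul_sum]
              exact Finset.sum_congr rfl fun i _ => by ring
            have h2 : t^2 * S = 1 := by
              have : t^2 * (Real.sqrt S)^2 = 1 := by
                rw [htdef]; field_simp
              rw [hsq] at this; exact this
            rw [h1, h2]
        have hle := hymax hmem
        have hfe : f (fun i => t * ystar i) = t * f ystar := by
          rw [hfdef, Finset.mul_sum]
          exact Finset.sum_congr rfl fun i _ => by ring
        rw [Set.mem_setOf_eq, hfe] at hle
        nlinarith
      have hMeq : f ystar = 0 := le_antisymm hMle hM0
      have hfe0 : f e = 0 := le_antisymm (hMeq ▸ hymax he_mem) hfe_nonneg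
      exact ⟨e, he_mem, he_sq, by rw [hfe0, hMeq]⟩
  -- construct w from y1
  set w : Fin n → ℝ := fun j => (if h j < 0 then (-1:ℝ) else 1) * y1 (σ⁻¹ j) with hwdef
  have habs : ∀ j, |w j| = y1 (σ⁻¹ j) := by
    intro j
    rw [hwdef]
    dsimp only
    rw [abs_mul]
    have h1 : |(if h j < 0 then (-1:ℝ) else 1)| = 1 := by split_ifs <;> norm_num
    rw [h1, one_mul, abs_of_nonneg (hy1K.1 _)]
  have hwsq : ∀ j, (w j)^2 = (y1 (σ⁻¹ j))^2 := fun j => by rw [← sq_abs, habs]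
  have hwsphere : ∑ j, (w j)^2 = 1 := by
    rw [Finset.sum_congr rfl fun j _ => hwsq j]
    rw [Equiv.sum_comp (σ⁻¹ : Equiv.Perm (Fin n)) (fun i => (y1 i)^2)]
    exact hy1sq
  have hhw : ∀ j, h j * w j = |h j| * y1 (σ⁻¹ j) := by
    intro j
    rw [hwdef]
    dsimp only
    rw [← mul_assoc]
    congr 1
    split_ifs with hj
    · rw [abs_of_neg hj]; ring
    · rw [abs_of_nonneg (not_lt.mp hj)]; ring
  have hobj : ∑ j, h j * w j = f y1 := by
    rw [Finset.sum_congr rfl fun j _ => hhw j, hfdef]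
    refine (Fintype.sum_equiv σ _ _ fun i => ?_).symm
    rw [ha_def i]
    simp
  have habs_fun : (fun j => |w j|) = y1 ∘ (σ⁻¹ : Equiv.Perm (Fin n)) := funext habs
  have hsorted : sortedAbs w = y1 ∘ Tuple.sort y1 := by
    show ((fun j => |w j|) ∘ Tuple.sort (fun j => |w j|)) = y1 ∘ Tuple.sort y1
    rw [habs_fun]
    exact Tuple.comp_perm_comp_sort_eq_comp_sort
  have hwSs : w ∈ Ss n k := by
    refine ⟨hwsphere, ?_⟩
    have hrw : ∀ i, sortedAbs w i = y1 (Tuple.sort y1 i) := fun i => congrFun hsorted i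
    rw [Finset.sum_congr rfl fun i _ => hrw i, Finset.sum_congr rfl fun i _ => hrw i]
    have hτbot := sorted_bottom_le (m := n - k) y1
    have hsplit1 := filter_split (n := n) (m := n - k) (fun i => y1 (Tuple.sort y1 i))
    have hsplit2 := filter_split (n := n) (m := n - k) y1
    have htot : ∑ i, y1 (Tuple.sort y1 i) = ∑ i, y1 i :=
      Equiv.sum_comp (Tuple.sort y1) y1
    have hy1c := hy1K.2.1
    rw [hsplit1, htot]
    linarith
  -- IsGreatest of W-set at f ystar
  have hG : IsGreatest {v : ℝ | ∃ w ∈ Ss n k, v = ∑ i, h i * w i} (f ystar) := by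
    constructor
    · exact ⟨w, hwSs, by rw [hobj, hy1f]⟩
    · rintro v ⟨w', hw', rfl⟩
      have hA : ∑ i, h i * w' i ≤ ∑ i, |h i| * |w' i| :=
        Finset.sum_le_sum fun i _ => (le_abs_self _).trans (le_of_eq (abs_mul _ _))
      set τ := Tuple.sort (fun i => |w' i|) with hτdef
      have hsw : ∀ i, sortedAbs w' i = |w' (τ i)| := fun i => rfl
      have hB : ∑ i, |h i| * |w' i| = ∑ j, sortedAbs h j * sortedAbs w' ((σ.trans τ⁻¹) j) := by
        refine (Fintype.sum_equiv σ _ _ fun j => ?_).symm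
        rw [ha_def j, hsw]
        simp
      have hmv : Monovary (sortedAbs h) (sortedAbs w') :=
        (sortedAbs_monotone h).monovary (sortedAbs_monotone w')
      have hC := hmv.sum_mul_comp_perm_le_sum_mul (σ := σ.trans τ⁻¹)
      have hD : (∑ j, sortedAbs h j * sortedAbs w' j) = f (sortedAbs w') := rfl
      have hKmem : sortedAbs w' ∈ K := by
        refine ⟨fun i => sortedAbs_nonneg w' i, hw'.2, ?_⟩
        rw [sum_sq_sortedAbs w', hw'.1]
      have hE := hymax hKmem
      calc ∑ i, h i * w' i ≤ ∑ i, |h i| * |w' i| := hA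
        _ = ∑ j, sortedAbs h j * sortedAbs w' ((σ.trans τ⁻¹) j) := hB
        _ ≤ ∑ j, sortedAbs h j * sortedAbs w' j := hC
        _ = f (sortedAbs w') := hD
        _ ≤ f ystar := hE
  rw [hG.csSup_eq]
  constructor
  · exact ⟨ystar, hyK.1, hyK.2.1, hyK.2.2, rfl⟩
  · rintro v ⟨y, hya, hyb, hyc, rfl⟩
    exact hymax ⟨hya, hyb, hyc⟩
end

section
/- Let 1 ≤ k ≤ n and let a, b ∈ ℝ^n. Then |Σ_{i=1}^{n−k} ã_i − Σ_{i=n−k+1}^n ã_i − Σ_{i=1}^{n−k} b̃_i + Σ_{i=n−k+1}^n b̃_i| ≤ √n · ‖a − b‖₂, where ‖·‖₂ is the Euclidean norm; i.e. the map a ↦ Σ_{i=1}^{n−k} ã_i − Σ_{i=n−k+1}^n ã_i is Lipschitz with constant √n. -/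
lemma aux_le {m n : ℕ} (e : Fin m → Fin n) (he : StrictMono e) :
    ∀ i : ℕ, ∀ h : i < m, i ≤ (e ⟨i, h⟩ : ℕ) := by
  intro i
  induction i with
  | zero => intro h; exact Nat.zero_le _
  | succ j ih =>
    intro h
    have hj : j < m := Nat.lt_of_succ_lt h
    have h1 := ih hj
    have h2 : ((e ⟨j, hj⟩ : Fin n) : ℕ) < ((e ⟨j + 1, h⟩ : Fin n) : ℕ) :=
      he (by simp [Fin.lt_def])
    omega

lemma aux_upper {m n : ℕ} (e : Fin m → Fin n) (he : StrictMono e) (t : Fin m) :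
    (e t : ℕ) + m ≤ n + t := by
  have hrev : StrictMono (fun s : Fin m => (e s.rev).rev) := by
    intro s u h
    exact Fin.rev_lt_rev.mpr (he (Fin.rev_lt_rev.mpr h))
  have h1 := aux_le _ hrev (t.rev : ℕ) t.rev.isLt
  simp only [Fin.eta, Fin.rev_rev] at h1
  have h2 : ((e t).rev : ℕ) = n - 1 - (e t : ℕ) := by
    simp [Fin.val_rev]; omega
  rw [h2] at h1
  have h3 : (t.rev : ℕ) = m - 1 - (t : ℕ) := by simp [Fin.val_rev]; omega
  have h4 : (e t : ℕ) < n := (e t).isLt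
  have h5 : (t : ℕ) < m := t.isLt
  omega

lemma filter_ge_eq_image (n m : ℕ) :
    Finset.univ.filter (fun i : Fin n => m ≤ (i : ℕ)) =
      Finset.image (fun t : Fin (n - m) => (⟨m + t, by omega⟩ : Fin n)) Finset.univ := by
  ext i
  simp only [Finset.mem_filter, Finset.mem_univ, true_and, Finset.mem_image]
  constructor
  · intro h
    refine ⟨⟨(i : ℕ) - m, by omega⟩, Fin.ext ?_⟩
    simp
    omega
  · rintro ⟨t, rfl⟩
    simp

lemma card_filter_ge (n m : ℕ) :
    (Finset.univ.filter (fun i : Fin n => m ≤ (i : ℕ))).card = n - m := by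
  rw [filter_ge_eq_image]
  rw [Finset.card_image_of_injective _ (fun s t h => by
    have : m + (s : ℕ) = m + (t : ℕ) := congrArg Fin.val h
    exact Fin.ext (by omega))]
  simp

lemma sum_le_sum_top {n : ℕ} (g : Fin n → ℝ) (hg : Monotone g) (m : ℕ)
    (B : Finset (Fin n)) (hB : B.card = n - m) :
    ∑ j ∈ B, g j ≤ ∑ j ∈ Finset.univ.filter (fun i : Fin n => m ≤ (i : ℕ)), g j := by
  classical
  set e := B.orderEmbOfFin hB with he
  have hBe : B = Finset.image e Finset.univ := by
    apply Finset.coe_injective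
    rw [Finset.coe_image, Finset.coe_univ, Set.image_univ, Finset.range_orderEmbOfFin]
  rw [hBe, Finset.sum_image (fun s _ t _ h => e.injective h)]
  rw [filter_ge_eq_image n m,
    Finset.sum_image (fun s _ t _ h => by
      have : m + (s : ℕ) = m + (t : ℕ) := congrArg Fin.val h
      exact Fin.ext (by omega))]
  apply Finset.sum_le_sum
  intro t _
  apply hg
  have := aux_upper e e.strictMono t
  simp only [Fin.le_def]
  omega

lemma image_perm_compl {n : ℕ} (σ : Equiv.Perm (Fin n)) (s : Finset (Fin n)) :
    (Finset.image σ s)ᶜ = Finset.image σ sᶜ := by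
  ext i
  simp only [Finset.mem_compl, Finset.mem_image]
  constructor
  · intro h
    exact ⟨σ.symm i, fun hc => h ⟨σ.symm i, hc, by simp⟩, by simp⟩
  · rintro ⟨j, hj, rfl⟩ ⟨j', hj', hje⟩
    exact hj (σ.injective hje ▸ hj')

lemma total_sortedAbs {n : ℕ} (x : Fin n → ℝ) :
    ∑ i, sortedAbs x i = ∑ i, |x i| :=
  Equiv.sum_comp (Tuple.sort (fun i => |x i|)) (fun i => |x i|)

/-- The sorted expression equals the signed sum over a particular subset of card `n - m`. -/
lemma key_eq {n : ℕ} (m : ℕ) (x : Fin n → ℝ) :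
    ∃ S : Finset (Fin n), S.card = n - m ∧
      ((∑ i ∈ Finset.univ.filter (fun i : Fin n => (i : ℕ) < m), sortedAbs x i) -
          ∑ i ∈ Finset.univ.filter (fun i : Fin n => m ≤ (i : ℕ)), sortedAbs x i)
        = ∑ i ∈ Sᶜ, |x i| - ∑ i ∈ S, |x i| := by
  classical
  set σ := Tuple.sort (fun i => |x i|) with hσ
  refine ⟨(Finset.univ.filter (fun i : Fin n => m ≤ (i : ℕ))).image σ, ?_, ?_⟩
  · rw [Finset.card_image_of_injective _ σ.injective, card_filter_ge]
  · have hge : ∑ i ∈ Finset.univ.filter (fun i : Fin n => m ≤ (i : ℕ)), sortedAbs x i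
        = ∑ j ∈ (Finset.univ.filter (fun i : Fin n => m ≤ (i : ℕ))).image σ, |x j| := by
      rw [Finset.sum_image (fun s _ t _ h => σ.injective h)]
      rfl
    have hlt : ∑ i ∈ Finset.univ.filter (fun i : Fin n => (i : ℕ) < m), sortedAbs x i
        = ∑ j ∈ ((Finset.univ.filter (fun i : Fin n => m ≤ (i : ℕ))).image σ)ᶜ, |x j| := by
      rw [image_perm_compl]
      have hfc : (Finset.univ.filter (fun i : Fin n => m ≤ (i : ℕ)))ᶜ
          = Finset.univ.filter (fun i : Fin n => (i : ℕ) < m) := by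
        ext i; simp [not_le]
      rw [hfc, Finset.sum_image (fun s _ t _ h => σ.injective h)]
      rfl
    rw [hge, hlt]

/-- The sorted expression is a lower bound over all subsets of card `n - m`. -/
lemma key_le {n : ℕ} (m : ℕ) (x : Fin n → ℝ) (S : Finset (Fin n)) (hS : S.card = n - m) :
    ((∑ i ∈ Finset.univ.filter (fun i : Fin n => (i : ℕ) < m), sortedAbs x i) -
        ∑ i ∈ Finset.univ.filter (fun i : Fin n => m ≤ (i : ℕ)), sortedAbs x i)
      ≤ ∑ i ∈ Sᶜ, |x i| - ∑ i ∈ S, |x i| := by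
  classical
  set σ := Tuple.sort (fun i => |x i|) with hσ
  -- rewrite both sides as total − 2 * (top part)
  have hsplit₁ : ∑ i ∈ Finset.univ.filter (fun i : Fin n => (i : ℕ) < m), sortedAbs x i
      + ∑ i ∈ Finset.univ.filter (fun i : Fin n => m ≤ (i : ℕ)), sortedAbs x i
      = ∑ i, |x i| := by
    rw [← total_sortedAbs x, ← Finset.sum_filter_add_sum_filter_not Finset.univ
      (fun i : Fin n => (i : ℕ) < m) (sortedAbs x)]
    congr 1
    apply Finset.sum_congr _ (fun _ _ => rfl)
    ext i; simp [not_lt]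
  have hsplit₂ : ∑ i ∈ Sᶜ, |x i| + ∑ i ∈ S, |x i| = ∑ i, |x i| :=
    Finset.sum_compl_add_sum S _
  -- so it suffices to prove the top-part inequality
  have hmain : ∑ i ∈ S, |x i|
      ≤ ∑ i ∈ Finset.univ.filter (fun i : Fin n => m ≤ (i : ℕ)), sortedAbs x i := by
    have hB : (S.image σ.symm).card = n - m := by
      rw [Finset.card_image_of_injective _ σ.symm.injective, hS]
    have h1 : ∑ j ∈ S.image σ.symm, sortedAbs x j = ∑ i ∈ S, |x i| := by
      rw [Finset.sum_image (fun s _ t _ h => σ.symm.injective h)]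
      apply Finset.sum_congr rfl
      intro i _
      show |x (σ (σ.symm i))| = |x i|
      rw [Equiv.apply_symm_apply]
    rw [← h1]
    exact sum_le_sum_top (sortedAbs x) (Tuple.monotone_sort _) m _ hB
  linarith

lemma lip {n : ℕ} (S : Finset (Fin n)) (a b : Fin n → ℝ) :
    (∑ i ∈ Sᶜ, |a i| - ∑ i ∈ S, |a i|) - (∑ i ∈ Sᶜ, |b i| - ∑ i ∈ S, |b i|)
      ≤ ∑ i, |a i - b i| := by
  have h1 : ∑ i ∈ Sᶜ, |a i| - ∑ i ∈ Sᶜ, |b i| ≤ ∑ i ∈ Sᶜ, |a i - b i| := by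
    rw [← Finset.sum_sub_distrib]
    exact Finset.sum_le_sum fun i _ => abs_sub_abs_le_abs_sub _ _
  have h2 : ∑ i ∈ S, |b i| - ∑ i ∈ S, |a i| ≤ ∑ i ∈ S, |a i - b i| := by
    rw [← Finset.sum_sub_distrib]
    exact Finset.sum_le_sum fun i _ => (abs_sub_comm (a i) (b i) ▸
      abs_sub_abs_le_abs_sub (b i) (a i))
  have h3 : ∑ i ∈ Sᶜ, |a i - b i| + ∑ i ∈ S, |a i - b i| = ∑ i, |a i - b i| :=
    Finset.sum_compl_add_sum S _
  linarith

lemma l1_le_sqrt {n : ℕ} (d : Fin n → ℝ) :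
    ∑ i, |d i| ≤ Real.sqrt n * Real.sqrt (∑ i, d i ^ 2) := by
  have h := sq_sum_le_card_mul_sum_sq (s := (Finset.univ : Finset (Fin n)))
    (f := fun i => |d i|)
  simp only [sq_abs, Finset.card_univ, Fintype.card_fin] at h
  have hnn : (0:ℝ) ≤ ∑ i, |d i| := Finset.sum_nonneg fun i _ => abs_nonneg _
  calc ∑ i, |d i| = Real.sqrt ((∑ i, |d i|) ^ 2) := (Real.sqrt_sq hnn).symm
    _ ≤ Real.sqrt ((n : ℝ) * ∑ i, d i ^ 2) := Real.sqrt_le_sqrt h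
    _ = Real.sqrt n * Real.sqrt (∑ i, d i ^ 2) := Real.sqrt_mul (by positivity) _

/-- the map `a ↦ ∑_{i=1}^{n-k} ã i - ∑_{i=n-k+1}^n ã i` is Lipschitz with
constant `√n` with respect to the Euclidean norm. -/
theorem stmt10 (n k : ℕ) (hk1 : 1 ≤ k) (hkn : k ≤ n) (a b : Fin n → ℝ) :
    |((∑ i ∈ Finset.univ.filter (fun i : Fin n => (i : ℕ) < n - k), sortedAbs a i) -
        ∑ i ∈ Finset.univ.filter (fun i : Fin n => n - k ≤ (i : ℕ)), sortedAbs a i) -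
      ((∑ i ∈ Finset.univ.filter (fun i : Fin n => (i : ℕ) < n - k), sortedAbs b i) -
        ∑ i ∈ Finset.univ.filter (fun i : Fin n => n - k ≤ (i : ℕ)), sortedAbs b i)| ≤
      Real.sqrt n * Real.sqrt (∑ i, (a i - b i) ^ 2) := by
  obtain ⟨Sa, hSa, hEa⟩ := key_eq (n - k) a
  obtain ⟨Sb, hSb, hEb⟩ := key_eq (n - k) b
  have hub := l1_le_sqrt (fun i => a i - b i)
  rw [abs_sub_le_iff]
  constructor
  · calc _ ≤ (∑ i ∈ Sbᶜ, |a i| - ∑ i ∈ Sb, |a i|)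
          - (∑ i ∈ Sbᶜ, |b i| - ∑ i ∈ Sb, |b i|) := by
          rw [← hEb]; linarith [key_le (n - k) a Sb hSb]
      _ ≤ ∑ i, |a i - b i| := lip Sb a b
      _ ≤ _ := hub
  · calc _ ≤ (∑ i ∈ Saᶜ, |b i| - ∑ i ∈ Sa, |b i|)
          - (∑ i ∈ Saᶜ, |a i| - ∑ i ∈ Sa, |a i|) := by
          rw [← hEa]; linarith [key_le (n - k) b Sa hSa]
      _ ≤ ∑ i, |b i - a i| := lip Sa b a
      _ ≤ _ := by
          have : ∀ i, |b i - a i| = |a i - b i| := fun i => abs_sub_comm _ _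
          simp only [this]
          exact hub
end

section
/- Let 1 ≤ k < n and h ∈ ℝ^n. Define h̄ ∈ ℝ^n whose first n−k entries are the magnitudes |h_1|,…,|h_{n−k}| sorted in nondecreasing order and whose last k entries are h_{n−k+1},…,h_n. Let S_w be the set of w on the unit Euclidean sphere of ℝ^n with Σ_{i=n−k+1}^n w_i ≥ Σ_{i=1}^{n−k} |w_i|. Let 0 ≤ c ≤ n−k be an integer and set ν = (h̄ᵀz − Σ_{i=1}^c h̄_i)/(n−c). If ν ≥ 0 and ν ≥ h̄_i for all 1 ≤ i ≤ c, then sup_{w ∈ S_w} hᵀw ≤ sqrt( Σ_{i=c+1}^n h̄_i² − (h̄ᵀz − Σ_{i=1}^c h̄_i)²/(n−c) ). -/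
open Finset
set_option maxHeartbeats 1000000

theorem sumlt {n m : ℕ} (hm : m ≤ n) (F : Fin n → ℝ) :
    ∑ i ∈ univ.filter (fun i : Fin n => (i:ℕ) < m), F i = ∑ j : Fin m, F (Fin.castLE hm j) := by
  have : ∑ j : Fin m, F (Fin.castLE hm j) = ∑ i ∈ univ.map (Fin.castLEEmb hm), F i :=
    (Finset.sum_map univ (Fin.castLEEmb hm) F).symm
  rw [this]
  congr 1
  ext i
  simp only [mem_filter, mem_univ, true_and, Finset.mem_map]
  constructor
  · rintro hi; exact ⟨⟨i, hi⟩, rfl⟩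
  · rintro ⟨j, rfl⟩; exact j.2

theorem splitsum {n : ℕ} (m : ℕ) (F : Fin n → ℝ) :
    ∑ i, F i = ∑ i ∈ univ.filter (fun i : Fin n => (i:ℕ) < m), F i +
      ∑ i ∈ univ.filter (fun i : Fin n => m ≤ (i:ℕ)), F i := by
  rw [← Finset.sum_filter_add_sum_filter_not univ (fun i : Fin n => (i:ℕ) < m) F]
  congr 1
  apply Finset.sum_congr _ (fun _ _ => rfl)
  ext i
  simp [not_lt]


/-- `sortLow n k f` sorts the first `n - k` entries of `f` in nondecreasing order. -/
noncomputable def sortLow (n k : ℕ) (f : Fin n → ℝ) : Fin (n - k) → ℝ :=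
  (fun j : Fin (n - k) => f (Fin.castLE (Nat.sub_le n k) j)) ∘
    Tuple.sort (fun j : Fin (n - k) => f (Fin.castLE (Nat.sub_le n k) j))

/-- `h̄`: the magnitudes of the first `n - k` entries of `h` sorted in nondecreasing
order, followed by the last `k` entries of `h` themselves. -/
noncomputable def barH (n k : ℕ) (h : Fin n → ℝ) : Fin n → ℝ := fun i =>
  if hi : (i : ℕ) < n - k then sortLow n k (fun j => |h j|) ⟨i, hi⟩ else h i

/-- with `ν = (h̄ᵀz - ∑_{i=1}^c h̄ i)/(n - c)`, if `ν ≥ 0` and `ν ≥ h̄ i`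
for `1 ≤ i ≤ c`, then
`sup_{w ∈ S_w} hᵀw ≤ sqrt(∑_{i=c+1}^n h̄ i² - (h̄ᵀz - ∑_{i=1}^c h̄ i)²/(n-c))`,
where `S_w` is the set of unit vectors with `∑_{i=n-k+1}^n w i ≥ ∑_{i=1}^{n-k} |w i|`. -/
theorem stmt14 (n k c : ℕ) (hk1 : 1 ≤ k) (hkn : k < n) (hc : c ≤ n - k)
    (h : Fin n → ℝ)
    (z : Fin n → ℝ) (hz : z = fun i : Fin n => if (i : ℕ) < n - k then (1 : ℝ) else -1)
    (ν : ℝ)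
    (hν : ν = ((∑ i, barH n k h i * z i) -
      ∑ i ∈ Finset.univ.filter (fun i : Fin n => (i : ℕ) < c), barH n k h i) / (n - c))
    (hν0 : 0 ≤ ν)
    (hνge : ∀ i : Fin n, (i : ℕ) < c → barH n k h i ≤ ν) :
    sSup {v : ℝ | ∃ w : Fin n → ℝ, (∑ i, (w i) ^ 2 = 1) ∧
        (∑ i ∈ Finset.univ.filter (fun i : Fin n => (i : ℕ) < n - k), |w i| ≤
          ∑ i ∈ Finset.univ.filter (fun i : Fin n => n - k ≤ (i : ℕ)), w i) ∧
        v = ∑ i, h i * w i} ≤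
      Real.sqrt ((∑ i ∈ Finset.univ.filter (fun i : Fin n => c ≤ (i : ℕ)), (barH n k h i) ^ 2) -
        ((∑ i, barH n k h i * z i) -
          ∑ i ∈ Finset.univ.filter (fun i : Fin n => (i : ℕ) < c), barH n k h i) ^ 2 / (n - c)) := by
  have hmn : n - k ≤ n := Nat.sub_le n k
  have hcn : c ≤ n := hc.trans hmn
  have hcltn : c < n := lt_of_le_of_lt hc (by omega)
  have hncR : (0:ℝ) < (n:ℝ) - c := by
    have : (c:ℝ) < n := by exact_mod_cast hcltn
    linarith
  -- pointwise facts about z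
  have hz1 : ∀ i : Fin n, (i:ℕ) < n - k → z i = 1 := by
    intro i hi; rw [hz]; simp [hi]
  have hzsq : ∀ i : Fin n, z i ^ 2 = 1 := by
    intro i; rw [hz]
    by_cases hi : (i:ℕ) < n - k <;> simp [hi]
  -- the sorting permutation
  set g : Fin (n-k) → ℝ := fun j => |h (Fin.castLE hmn j)| with hg
  set σ := Tuple.sort g with hσ
  have hbar1 : ∀ j : Fin (n-k), barH n k h (Fin.castLE hmn j) = g (σ j) := by
    intro j
    have hj : ((Fin.castLE hmn j : Fin n) : ℕ) < n - k := j.2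
    simp only [barH]
    rw [dif_pos hj]
    rfl
  have hbar2 : ∀ i : Fin n, ¬ ((i:ℕ) < n - k) → barH n k h i = h i := by
    intro i hi; simp only [barH]; rw [dif_neg hi]
  -- abbreviations
  set T : ℝ := (∑ i, barH n k h i * z i) -
      ∑ i ∈ Finset.univ.filter (fun i : Fin n => (i : ℕ) < c), barH n k h i with hT
  apply Real.sSup_le _ (Real.sqrt_nonneg _)
  rintro v ⟨w, hw1, hw2, rfl⟩
  set wt : Fin n → ℝ := fun i =>
    if hi : (i:ℕ) < n - k then |w (Fin.castLE hmn (σ ⟨i, hi⟩))| else w i with hwt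
  have hwt1 : ∀ j : Fin (n-k), wt (Fin.castLE hmn j) = |w (Fin.castLE hmn (σ j))| := by
    intro j; exact dif_pos j.2
  have hwt2 : ∀ i : Fin n, ¬ ((i:ℕ) < n - k) → wt i = w i := by
    intro i hi; exact dif_neg hi
  have hwtpos : ∀ i : Fin n, (i:ℕ) < n - k → 0 ≤ wt i := by
    intro i hi
    have : wt i = |w (Fin.castLE hmn (σ ⟨i, hi⟩))| := dif_pos hi
    rw [this]; exact abs_nonneg _
  -- head sums of wt
  have hwthead : ∑ i ∈ univ.filter (fun i : Fin n => (i:ℕ) < n-k), wt i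
      = ∑ i ∈ univ.filter (fun i : Fin n => (i:ℕ) < n-k), |w i| := by
    rw [sumlt hmn, sumlt hmn]
    rw [Finset.sum_congr rfl (fun j _ => hwt1 j)]
    exact Equiv.sum_comp σ (fun j => |w (Fin.castLE hmn j)|)
  have hwtheadsq : ∑ i ∈ univ.filter (fun i : Fin n => (i:ℕ) < n-k), wt i ^ 2
      = ∑ i ∈ univ.filter (fun i : Fin n => (i:ℕ) < n-k), w i ^ 2 := by
    rw [sumlt hmn, sumlt hmn]
    have e1 : ∀ j : Fin (n-k), wt (Fin.castLE hmn j) ^ 2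
        = (fun j' => w (Fin.castLE hmn j') ^ 2) (σ j) := by
      intro j; rw [hwt1 j, sq_abs]
    rw [Finset.sum_congr rfl (fun j _ => e1 j)]
    exact Equiv.sum_comp σ (fun j => w (Fin.castLE hmn j) ^ 2)
  -- norm of wt
  have hwtnorm : ∑ i, wt i ^ 2 = 1 := by
    rw [splitsum (n-k) (fun i => wt i ^ 2), hwtheadsq]
    rw [splitsum (n-k) (fun i => w i ^ 2)] at hw1
    have : ∑ i ∈ univ.filter (fun i : Fin n => n - k ≤ (i:ℕ)), wt i ^ 2
        = ∑ i ∈ univ.filter (fun i : Fin n => n - k ≤ (i:ℕ)), w i ^ 2 := by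
      apply Finset.sum_congr rfl
      intro i hi
      simp only [mem_filter, mem_univ, true_and] at hi
      rw [hwt2 i (not_lt.2 hi)]
    rw [this]; exact hw1
  -- step 1 : h·w ≤ h̄·wt
  have s1 : ∑ i, h i * w i ≤ ∑ i, barH n k h i * wt i := by
    rw [splitsum (n-k) (fun i => h i * w i), splitsum (n-k) (fun i => barH n k h i * wt i)]
    apply add_le_add
    · rw [sumlt hmn, sumlt hmn]
      have e1 : ∀ j : Fin (n-k), barH n k h (Fin.castLE hmn j) * wt (Fin.castLE hmn j)
          = (fun j' => g j' * |w (Fin.castLE hmn j')|) (σ j) := by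
        intro j; rw [hbar1 j, hwt1 j]
      rw [Finset.sum_congr rfl (fun j _ => e1 j),
        Equiv.sum_comp σ (fun j => g j * |w (Fin.castLE hmn j)|)]
      apply Finset.sum_le_sum
      intro j _
      calc h (Fin.castLE hmn j) * w (Fin.castLE hmn j)
          ≤ |h (Fin.castLE hmn j) * w (Fin.castLE hmn j)| := le_abs_self _
        _ = g j * |w (Fin.castLE hmn j)| := abs_mul _ _
    · apply le_of_eq
      apply Finset.sum_congr rfl
      intro i hi
      simp only [mem_filter, mem_univ, true_and] at hi
      rw [hbar2 i (not_lt.2 hi), hwt2 i (not_lt.2 hi)]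
  -- step 2 : z·wt ≤ 0
  have s2 : ∑ i, z i * wt i ≤ 0 := by
    rw [splitsum (n-k) (fun i => z i * wt i)]
    have e1 : ∑ i ∈ univ.filter (fun i : Fin n => (i:ℕ) < n-k), z i * wt i
        = ∑ i ∈ univ.filter (fun i : Fin n => (i:ℕ) < n-k), wt i := by
      apply Finset.sum_congr rfl
      intro i hi
      simp only [mem_filter, mem_univ, true_and] at hi
      rw [hz1 i hi, one_mul]
    have e2 : ∑ i ∈ univ.filter (fun i : Fin n => n - k ≤ (i:ℕ)), z i * wt i
        = -∑ i ∈ univ.filter (fun i : Fin n => n - k ≤ (i:ℕ)), w i := by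
      rw [← Finset.sum_neg_distrib]
      apply Finset.sum_congr rfl
      intro i hi
      simp only [mem_filter, mem_univ, true_and] at hi
      have : z i = -1 := by rw [hz]; simp [not_lt.2 hi]
      rw [this, hwt2 i (not_lt.2 hi)]; ring
    rw [e1, e2, hwthead]
    linarith
  -- Lagrangian identity
  have key : ∑ i, barH n k h i * wt i
      = (∑ i, (barH n k h i - ν * z i) * wt i) + ν * ∑ i, z i * wt i := by
    rw [Finset.mul_sum, ← Finset.sum_add_distrib]
    apply Finset.sum_congr rfl
    intro i _; ring
  -- first c terms of the shifted sum are nonpositive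
  have s5 : ∑ i ∈ univ.filter (fun i : Fin n => (i:ℕ) < c),
      (barH n k h i - ν * z i) * wt i ≤ 0 := by
    apply Finset.sum_nonpos
    intro i hi
    simp only [mem_filter, mem_univ, true_and] at hi
    have him : (i:ℕ) < n - k := lt_of_lt_of_le hi hc
    rw [hz1 i him, mul_one]
    exact mul_nonpos_of_nonpos_of_nonneg (sub_nonpos.2 (hνge i hi)) (hwtpos i him)
  -- Cauchy-Schwarz part
  set S := univ.filter (fun i : Fin n => c ≤ (i:ℕ)) with hS
  have htailsq : ∑ i ∈ S, wt i ^ 2 ≤ 1 := by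
    rw [splitsum c (fun i => wt i ^ 2)] at hwtnorm
    have : (0:ℝ) ≤ ∑ i ∈ univ.filter (fun i : Fin n => (i:ℕ) < c), wt i ^ 2 :=
      Finset.sum_nonneg (fun i _ => sq_nonneg _)
    linarith
  have hcs : ∑ i ∈ S, (barH n k h i - ν * z i) * wt i
      ≤ Real.sqrt (∑ i ∈ S, (barH n k h i - ν * z i) ^ 2) := by
    have h1 := Finset.sum_mul_sq_le_sq_mul_sq S (fun i => barH n k h i - ν * z i) wt
    have h2 : (0:ℝ) ≤ ∑ i ∈ S, (barH n k h i - ν * z i) ^ 2 :=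
      Finset.sum_nonneg (fun i _ => sq_nonneg _)
    calc ∑ i ∈ S, (barH n k h i - ν * z i) * wt i
        ≤ |∑ i ∈ S, (barH n k h i - ν * z i) * wt i| := le_abs_self _
      _ = Real.sqrt ((∑ i ∈ S, (barH n k h i - ν * z i) * wt i) ^ 2) :=
          (Real.sqrt_sq_eq_abs _).symm
      _ ≤ Real.sqrt ((∑ i ∈ S, (barH n k h i - ν * z i) ^ 2) * ∑ i ∈ S, wt i ^ 2) :=
          Real.sqrt_le_sqrt h1
      _ ≤ Real.sqrt ((∑ i ∈ S, (barH n k h i - ν * z i) ^ 2) * 1) :=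
          Real.sqrt_le_sqrt (mul_le_mul_of_nonneg_left htailsq h2)
      _ = Real.sqrt (∑ i ∈ S, (barH n k h i - ν * z i) ^ 2) := by rw [mul_one]
  -- computing the quadratic sum
  have hScard : ∑ i ∈ S, (1:ℝ) = (n:ℝ) - c := by
    have h1 := splitsum (n := n) c (fun _ => (1:ℝ))
    have h2 : ∑ _i : Fin n, (1:ℝ) = (n:ℝ) := by simp
    have h3 : ∑ i ∈ univ.filter (fun i : Fin n => (i:ℕ) < c), (1:ℝ) = (c:ℝ) := by
      rw [sumlt hcn]; simp
    rw [h2, h3] at h1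
    linarith
  have hZS : ∑ i ∈ S, barH n k h i * z i = T := by
    have h1 := splitsum (n := n) c (fun i => barH n k h i * z i)
    have h2 : ∑ i ∈ univ.filter (fun i : Fin n => (i:ℕ) < c), barH n k h i * z i
        = ∑ i ∈ univ.filter (fun i : Fin n => (i:ℕ) < c), barH n k h i := by
      apply Finset.sum_congr rfl
      intro i hi
      simp only [mem_filter, mem_univ, true_and] at hi
      rw [hz1 i (lt_of_lt_of_le hi hc), mul_one]
    rw [h2] at h1
    rw [hT]; linarith
  have hquad : ∑ i ∈ S, (barH n k h i - ν * z i) ^ 2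
      = (∑ i ∈ S, barH n k h i ^ 2) - T ^ 2 / ((n:ℝ) - c) := by
    have e1 : ∀ i ∈ S, (barH n k h i - ν * z i) ^ 2
        = barH n k h i ^ 2 - 2 * ν * (barH n k h i * z i) + ν ^ 2 * 1 := by
      intro i _
      have hzi := hzsq i
      nlinarith [hzsq i]
    rw [Finset.sum_congr rfl e1]
    rw [Finset.sum_add_distrib, Finset.sum_sub_distrib, ← Finset.mul_sum, ← Finset.mul_sum,
      hZS, hScard]
    rw [hν]
    field_simp
    ring
  -- put everything together
  have hsplit := splitsum (n := n) c (fun i => (barH n k h i - ν * z i) * wt i)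
  calc ∑ i, h i * w i ≤ ∑ i, barH n k h i * wt i := s1
    _ = (∑ i, (barH n k h i - ν * z i) * wt i) + ν * ∑ i, z i * wt i := key
    _ ≤ ∑ i, (barH n k h i - ν * z i) * wt i := by
        nlinarith [mul_nonpos_of_nonneg_of_nonpos hν0 s2]
    _ ≤ ∑ i ∈ S, (barH n k h i - ν * z i) * wt i := by rw [hsplit]; linarith
    _ ≤ Real.sqrt (∑ i ∈ S, (barH n k h i - ν * z i) ^ 2) := hcs
    _ = Real.sqrt ((∑ i ∈ S, barH n k h i ^ 2) - T ^ 2 / ((n:ℝ) - c)) := by rw [hquad]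
end

section
/- Let 1 ≤ k < n and h ∈ ℝ^n. Define ĥ ∈ ℝ^n whose first n−k entries are the magnitudes |h_1|,…,|h_{n−k}| sorted in nondecreasing order and whose last k entries are |h_{n−k+1}|,…,|h_n|. Let S_sec be the set of w on the unit Euclidean sphere of ℝ^n with Σ_{i=n−k+1}^n |w_i| ≥ Σ_{i=1}^{n−k} |w_i|. Let 0 ≤ c ≤ n−k be an integer and set ν = (ĥᵀz − Σ_{i=1}^c ĥ_i)/(n−c). If ν ≥ 0 and ν ≥ ĥ_i for all 1 ≤ i ≤ c, then sup_{w ∈ S_sec} hᵀw ≤ sqrt( Σ_{i=c+1}^n ĥ_i² − (ĥᵀz − Σ_{i=1}^c ĥ_i)²/(n−c) ). -/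
open Finset

/-- `ĥ`: the magnitudes of the first `n - k` entries of `h` sorted in nondecreasing
order, followed by the magnitudes of the last `k` entries of `h`. -/
noncomputable def hatH (n k : ℕ) (h : Fin n → ℝ) : Fin n → ℝ := fun i =>
  if hi : (i : ℕ) < n - k then sortLow n k (fun j => |h j|) ⟨i, hi⟩ else |h i|

/-!
For `w ∈ S_sec`, `hᵀw ≤ ∑ |h i| |w i| = ĥᵀu`, where `u` is `|w|` permuted by the sorting
permutation of the first `n - k` coordinates; `u` is a nonnegative unit vector with `zᵀu ≤ 0`.
Since `ν ≥ 0`, `ĥᵀu ≤ (ĥ - ν z)ᵀu`; the coordinates `i ≤ c` contribute nonpositively because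
`ĥ i ≤ ν`, and Cauchy–Schwarz on the remaining ones bounds the rest by
`√(∑_{i > c} (ĥ i - ν z i)²)`. As `ν` is the least-squares coefficient of `ĥ` on `z` over
`i > c`, this square root is exactly the claimed bound.
-/

theorem Equiv.Perm.viaFintypeEmbedding_castLEEmb_apply {m n : ℕ} (hm : m ≤ n)
    (σ : Equiv.Perm (Fin m)) (i : Fin n) :
    σ.viaFintypeEmbedding (Fin.castLEEmb hm) i =
      if hi : (i : ℕ) < m then Fin.castLE hm (σ ⟨i, hi⟩) else i := by
  split_ifs with hi
  · exact σ.viaFintypeEmbedding_apply_image _ ⟨i, hi⟩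
  · exact σ.viaFintypeEmbedding_apply_notMem_range _ (by simpa [Fin.range_castLE] using hi)

theorem exists_perm_hatH_eq_abs_comp (n k : ℕ) (h : Fin n → ℝ) :
    ∃ τ : Equiv.Perm (Fin n), (∀ i, hatH n k h i = |h (τ i)|) ∧
      ∀ i, ((τ i : ℕ) < n - k ↔ (i : ℕ) < n - k) := by
  let σ := Tuple.sort (fun j : Fin (n - k) => |h (Fin.castLE (Nat.sub_le n k) j)|)
  refine ⟨σ.viaFintypeEmbedding (Fin.castLEEmb (Nat.sub_le n k)), fun i => ?_, fun i => ?_⟩ <;>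
  · rw [Equiv.Perm.viaFintypeEmbedding_castLEEmb_apply]
    by_cases hi : (i : ℕ) < n - k <;> simp [hatH, sortLow, hi, σ]

theorem exists_nonneg_rearrangement (n k : ℕ) (h w : Fin n → ℝ)
    (hw : ∑ i ∈ univ.filter (fun i : Fin n => (i : ℕ) < n - k), |w i| ≤
      ∑ i ∈ univ.filter (fun i : Fin n => n - k ≤ (i : ℕ)), |w i|) :
    ∃ u : Fin n → ℝ, (∀ i, 0 ≤ u i) ∧ ∑ i, u i ^ 2 = ∑ i, w i ^ 2 ∧
      ∑ i : Fin n, (if (i : ℕ) < n - k then (1 : ℝ) else -1) * u i ≤ 0 ∧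
      ∑ i, h i * w i ≤ ∑ i, hatH n k h i * u i := by
  obtain ⟨τ, hhat, hτ⟩ := exists_perm_hatH_eq_abs_comp n k h
  refine ⟨fun i => |w (τ i)|, fun i => abs_nonneg _, ?_, ?_, ?_⟩
  · simp only [sq_abs]
    exact Equiv.sum_comp τ (fun i => w i ^ 2)
  · have hsign : ∑ i : Fin n, (if (i : ℕ) < n - k then (1 : ℝ) else -1) * |w i| =
        ∑ i ∈ univ.filter (fun i : Fin n => (i : ℕ) < n - k), |w i| -
          ∑ i ∈ univ.filter (fun i : Fin n => n - k ≤ (i : ℕ)), |w i| := by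
      simp only [ite_mul, one_mul, neg_one_mul, sum_ite, sum_neg_distrib, not_lt]
      ring
    calc ∑ i : Fin n, (if (i : ℕ) < n - k then (1 : ℝ) else -1) * |w (τ i)|
        = ∑ i : Fin n, (if (τ i : ℕ) < n - k then (1 : ℝ) else -1) * |w (τ i)| := by
          simp only [hτ]
      _ = ∑ i : Fin n, (if (i : ℕ) < n - k then (1 : ℝ) else -1) * |w i| :=
          Equiv.sum_comp τ (fun i => (if (i : ℕ) < n - k then (1 : ℝ) else -1) * |w i|)
      _ ≤ 0 := by linarith
  · calc ∑ i, h i * w i ≤ ∑ i, |h i| * |w i| :=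
          sum_le_sum fun i _ => (le_abs_self _).trans (abs_mul _ _).le
      _ = ∑ i, hatH n k h i * |w (τ i)| := by
          simp only [hhat]
          exact (Equiv.sum_comp τ (fun i => |h i| * |w i|)).symm

theorem sum_mul_le_sqrt_sum_sq_sub_mul {ι : Type*} [Fintype ι] [DecidableEq ι] (s : Finset ι)
    (a z u : ι → ℝ) {ν : ℝ} (hν : 0 ≤ ν) (hu : ∀ i, 0 ≤ u i) (hu1 : ∑ i, u i ^ 2 ≤ 1)
    (hzu : ∑ i, z i * u i ≤ 0) (hs : ∀ i ∉ s, a i ≤ ν * z i) :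
    ∑ i, a i * u i ≤ √(∑ i ∈ s, (a i - ν * z i) ^ 2) := by
  have hshift : ∑ i, (a i - ν * z i) * u i = ∑ i, a i * u i - ν * ∑ i, z i * u i := by
    simp only [sub_mul, sum_sub_distrib, mul_sum, mul_assoc]
  have hcompl : ∑ i ∈ sᶜ, (a i - ν * z i) * u i ≤ 0 :=
    sum_nonpos fun i hi => mul_nonpos_of_nonpos_of_nonneg
      (sub_nonpos.mpr (hs i (mem_compl.mp hi))) (hu i)
  have hus : √(∑ i ∈ s, u i ^ 2) ≤ 1 :=
    Real.sqrt_le_one.mpr ((sum_le_univ_sum_of_nonneg fun i => sq_nonneg (u i)).trans hu1)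
  calc ∑ i, a i * u i ≤ ∑ i, (a i - ν * z i) * u i := by
        rw [hshift]; nlinarith
    _ ≤ ∑ i ∈ s, (a i - ν * z i) * u i := by
        rw [← sum_add_sum_compl s]; linarith
    _ ≤ √(∑ i ∈ s, (a i - ν * z i) ^ 2) * √(∑ i ∈ s, u i ^ 2) :=
        Real.sum_mul_le_sqrt_mul_sqrt _ _ _
    _ ≤ √(∑ i ∈ s, (a i - ν * z i) ^ 2) :=
        mul_le_of_le_one_right (Real.sqrt_nonneg _) hus

theorem sum_sq_sub_div_card_mul {ι : Type*} (s : Finset ι) (a z : ι → ℝ)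
    (hz : ∀ i ∈ s, z i ^ 2 = 1) :
    ∑ i ∈ s, (a i - (∑ j ∈ s, a j * z j) / #s * z i) ^ 2 =
      ∑ i ∈ s, a i ^ 2 - (∑ i ∈ s, a i * z i) ^ 2 / #s := by
  rcases s.eq_empty_or_nonempty with rfl | hne
  · simp
  set S := ∑ i ∈ s, a i * z i
  have hcard : (#s : ℝ) ≠ 0 := by exact_mod_cast hne.card_pos.ne'
  have hexpand : ∑ i ∈ s, (a i - S / #s * z i) ^ 2 =
      ∑ i ∈ s, a i ^ 2 - 2 * (S / #s) * S + (S / #s) ^ 2 * ∑ i ∈ s, z i ^ 2 := by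
    simp only [S, mul_sum, ← sum_sub_distrib, ← sum_add_distrib]
    exact sum_congr rfl fun i _ => by ring
  rw [hexpand, sum_congr rfl hz, sum_const, nsmul_one]
  field_simp
  ring

/-- with `ν = (ĥᵀz - ∑_{i=1}^c ĥ i)/(n - c)`, if `ν ≥ 0` and `ν ≥ ĥ i`
for `1 ≤ i ≤ c`, then
`sup_{w ∈ S_sec} hᵀw ≤ sqrt(∑_{i=c+1}^n ĥ i² - (ĥᵀz - ∑_{i=1}^c ĥ i)²/(n-c))`,
where `S_sec` is the set of unit vectors with `∑_{i=n-k+1}^n |w i| ≥ ∑_{i=1}^{n-k} |w i|`. -/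
theorem stmt16 (n k c : ℕ) (hk1 : 1 ≤ k) (hkn : k < n) (hc : c ≤ n - k)
    (h : Fin n → ℝ)
    (z : Fin n → ℝ) (hz : z = fun i : Fin n => if (i : ℕ) < n - k then (1 : ℝ) else -1)
    (ν : ℝ)
    (hν : ν = ((∑ i, hatH n k h i * z i) -
      ∑ i ∈ Finset.univ.filter (fun i : Fin n => (i : ℕ) < c), hatH n k h i) / (n - c))
    (hν0 : 0 ≤ ν)
    (hνge : ∀ i : Fin n, (i : ℕ) < c → hatH n k h i ≤ ν) :
    sSup {v : ℝ | ∃ w : Fin n → ℝ, (∑ i, (w i) ^ 2 = 1) ∧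
        (∑ i ∈ Finset.univ.filter (fun i : Fin n => (i : ℕ) < n - k), |w i| ≤
          ∑ i ∈ Finset.univ.filter (fun i : Fin n => n - k ≤ (i : ℕ)), |w i|) ∧
        v = ∑ i, h i * w i} ≤
      Real.sqrt ((∑ i ∈ Finset.univ.filter (fun i : Fin n => c ≤ (i : ℕ)), (hatH n k h i) ^ 2) -
        ((∑ i, hatH n k h i * z i) -
          ∑ i ∈ Finset.univ.filter (fun i : Fin n => (i : ℕ) < c), hatH n k h i) ^ 2 / (n - c)) := by
  have hz_head : ∀ i : Fin n, (i : ℕ) < c → z i = 1 := fun i hi => by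
    rw [hz]; exact if_pos (by omega)
  set s := univ.filter (fun i : Fin n => c ≤ (i : ℕ))
  have hcard : (#s : ℝ) = n - c := by
    have hs : s = Ici ⟨c, by omega⟩ := by ext i; simp [s, Fin.le_def]
    rw [hs, Fin.card_Ici, Nat.cast_sub (by omega)]
  have hS : ∑ i ∈ s, hatH n k h i * z i = (∑ i, hatH n k h i * z i) -
      ∑ i ∈ univ.filter (fun i : Fin n => (i : ℕ) < c), hatH n k h i := by
    have hhead : ∑ i ∈ univ.filter (fun i : Fin n => (i : ℕ) < c), hatH n k h i * z i =
        ∑ i ∈ univ.filter (fun i : Fin n => (i : ℕ) < c), hatH n k h i :=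
      sum_congr rfl fun i hi => by rw [hz_head i (mem_filter.mp hi).2, mul_one]
    rw [← sum_filter_add_sum_filter_not univ (fun i : Fin n => (i : ℕ) < c), hhead]
    simp [s]
  apply Real.sSup_le _ (Real.sqrt_nonneg _)
  rintro _ ⟨w, hw1, hw2, rfl⟩
  obtain ⟨u, hu0, hu1, hzu, hhu⟩ := exists_nonneg_rearrangement n k h w hw2
  calc ∑ i, h i * w i ≤ ∑ i, hatH n k h i * u i := hhu
    _ ≤ √(∑ i ∈ s, (hatH n k h i - ν * z i) ^ 2) :=
        sum_mul_le_sqrt_sum_sq_sub_mul s _ z u hν0 hu0 (hu1.trans hw1).le (hz ▸ hzu)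
          fun i hi => by
            have hic : (i : ℕ) < c := by simpa [s] using hi
            rw [hz_head i hic, mul_one]; exact hνge i hic
    _ = _ := by
        rw [hν, ← hS, ← hcard, sum_sq_sub_div_card_mul]
        intro i _; simp only [hz]; split_ifs <;> norm_num
end

section
/- Let 1 ≤ k < n and h ∈ ℝ^n. Define h̄⁺ ∈ ℝ^n whose first n−k entries are the values h_1,…,h_{n−k} sorted in nondecreasing order and whose last k entries are −h_{n−k+1},…,−h_n. Let S_w⁺ be the set of w on the unit Euclidean sphere of ℝ^n with w_i ≥ 0 for all 1 ≤ i ≤ n−k and −Σ_{i=n−k+1}^n w_i ≥ Σ_{i=1}^{n−k} w_i. Let 0 ≤ c ≤ n−k be an integer and set ν = ((h̄⁺)ᵀz − Σ_{i=1}^c h̄⁺_i)/(n−c). If ν ≥ 0 and ν ≥ h̄⁺_i for all 1 ≤ i ≤ c, then sup_{w ∈ S_w⁺} hᵀw ≤ sqrt( Σ_{i=c+1}^n (h̄⁺_i)² − ((h̄⁺)ᵀz − Σ_{i=1}^c h̄⁺_i)²/(n−c) ). -/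
open Finset


lemma filter_lt_eq_map {n m : ℕ} (hm : m ≤ n) :
    Finset.univ.filter (fun i : Fin n => (i : ℕ) < m)
      = Finset.map ⟨Fin.castLE hm, Fin.castLE_injective hm⟩ Finset.univ := by
  ext i
  simp only [Finset.mem_filter, Finset.mem_univ, true_and, Finset.mem_map,
    Function.Embedding.coeFn_mk]
  constructor
  · intro hi; exact ⟨⟨i, hi⟩, Fin.ext rfl⟩
  · rintro ⟨j, rfl⟩; exact j.isLt

lemma sum_filter_lt {n m : ℕ} (hm : m ≤ n) (F : Fin n → ℝ) :
    ∑ i ∈ Finset.univ.filter (fun i : Fin n => (i : ℕ) < m), F i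
      = ∑ j : Fin m, F (Fin.castLE hm j) := by
  rw [filter_lt_eq_map hm, Finset.sum_map]; rfl

lemma card_filter_lt {n m : ℕ} (hm : m ≤ n) :
    (Finset.univ.filter (fun i : Fin n => (i : ℕ) < m)).card = m := by
  rw [filter_lt_eq_map hm, Finset.card_map, Finset.card_univ, Fintype.card_fin]

lemma filter_not_lt {n m : ℕ} :
    Finset.univ.filter (fun i : Fin n => ¬ (i : ℕ) < m)
      = Finset.univ.filter (fun i : Fin n => m ≤ (i : ℕ)) := by
  simp only [not_lt]

lemma sum_split {n m : ℕ} (hm : m ≤ n) (F : Fin n → ℝ) :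
    ∑ i, F i = (∑ j : Fin m, F (Fin.castLE hm j))
      + ∑ i ∈ Finset.univ.filter (fun i : Fin n => m ≤ (i : ℕ)), F i := by
  rw [← sum_filter_lt hm, ← filter_not_lt,
    Finset.sum_filter_add_sum_filter_not Finset.univ (fun i : Fin n => (i : ℕ) < m) F]

lemma key (n c : ℕ) (hcn : c < n) (g u z : Fin n → ℝ)
    (hz2 : ∀ i, z i ^ 2 = 1)
    (T ν : ℝ)
    (hT : T = ∑ i ∈ Finset.univ.filter (fun i : Fin n => c ≤ (i : ℕ)), g i * z i)
    (hν : ν = T / ((n : ℝ) - c)) (hν0 : 0 ≤ ν)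
    (hge : ∀ i : Fin n, (i : ℕ) < c → g i ≤ ν)
    (hupos : ∀ i : Fin n, (i : ℕ) < c → 0 ≤ u i)
    (husq : ∑ i ∈ Finset.univ.filter (fun i : Fin n => c ≤ (i : ℕ)), u i ^ 2 ≤ 1)
    (hcons : ∑ i ∈ Finset.univ.filter (fun i : Fin n => (i : ℕ) < c), u i ≤
      - ∑ i ∈ Finset.univ.filter (fun i : Fin n => c ≤ (i : ℕ)), z i * u i) :
    ∑ i, g i * u i ≤
      Real.sqrt ((∑ i ∈ Finset.univ.filter (fun i : Fin n => c ≤ (i : ℕ)), g i ^ 2)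
        - T ^ 2 / ((n : ℝ) - c)) := by
  classical
  have hnc : (0 : ℝ) < (n : ℝ) - c := by
    have : (c : ℝ) < n := by exact_mod_cast hcn
    linarith
  set S := Finset.univ.filter (fun i : Fin n => c ≤ (i : ℕ)) with hS
  set Sc := Finset.univ.filter (fun i : Fin n => (i : ℕ) < c) with hSc
  have hsplit : ∀ F : Fin n → ℝ, ∑ i, F i = ∑ i ∈ Sc, F i + ∑ i ∈ S, F i := by
    intro F
    rw [hS, hSc, ← filter_not_lt,
      Finset.sum_filter_add_sum_filter_not Finset.univ (fun i : Fin n => (i : ℕ) < c) F]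
  have hcardSc : Sc.card = c := card_filter_lt (le_of_lt hcn)
  have hcardsum : Sc.card + S.card = n := by
    rw [hS, hSc, ← filter_not_lt]
    rw [Finset.card_filter_add_card_filter_not]
    simp
  have hcard : (S.card : ℝ) = (n : ℝ) - c := by
    have : c + S.card = n := by rw [← hcardSc]; exact hcardsum
    have := congrArg (fun x : ℕ => (x : ℝ)) this
    push_cast at this
    linarith
  -- step 1
  have h1 : ∑ i, g i * u i ≤ ∑ i ∈ S, (g i - ν * z i) * u i := by
    rw [hsplit (fun i => g i * u i)]
    have hA : ∑ i ∈ Sc, g i * u i ≤ ν * ∑ i ∈ Sc, u i := by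
      rw [Finset.mul_sum]
      apply Finset.sum_le_sum
      intro i hi
      have hic : (i : ℕ) < c := by
        simpa [hSc, Finset.mem_filter] using hi
      exact mul_le_mul_of_nonneg_right (hge i hic) (hupos i hic)
    have hB : ν * ∑ i ∈ Sc, u i ≤ - (ν * ∑ i ∈ S, z i * u i) := by
      rw [← mul_neg]
      exact mul_le_mul_of_nonneg_left hcons hν0
    have hC : ∑ i ∈ S, (g i - ν * z i) * u i
        = ∑ i ∈ S, g i * u i - ν * ∑ i ∈ S, z i * u i := by
      rw [Finset.mul_sum, ← Finset.sum_sub_distrib]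
      apply Finset.sum_congr rfl
      intro i _
      ring
    linarith
  -- step 2: Cauchy-Schwarz
  have h2 : ∑ i ∈ S, (g i - ν * z i) * u i
      ≤ Real.sqrt (∑ i ∈ S, (g i - ν * z i) ^ 2) := by
    calc ∑ i ∈ S, (g i - ν * z i) * u i
        ≤ Real.sqrt (∑ i ∈ S, (g i - ν * z i) ^ 2) * Real.sqrt (∑ i ∈ S, u i ^ 2) :=
          Real.sum_mul_le_sqrt_mul_sqrt S _ _
      _ ≤ Real.sqrt (∑ i ∈ S, (g i - ν * z i) ^ 2) * 1 := by
          apply mul_le_mul_of_nonneg_left _ (Real.sqrt_nonneg _)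
          exact Real.sqrt_le_one.mpr husq
      _ = Real.sqrt (∑ i ∈ S, (g i - ν * z i) ^ 2) := mul_one _
  -- step 3: algebraic identity
  have h3 : ∑ i ∈ S, (g i - ν * z i) ^ 2
      = (∑ i ∈ S, g i ^ 2) - T ^ 2 / ((n : ℝ) - c) := by
    have expand : ∑ i ∈ S, (g i - ν * z i) ^ 2
        = (∑ i ∈ S, g i ^ 2) - 2 * ν * (∑ i ∈ S, g i * z i)
          + ν ^ 2 * ∑ i ∈ S, z i ^ 2 := by
      rw [Finset.mul_sum, Finset.mul_sum, ← Finset.sum_sub_distrib, ← Finset.sum_add_distrib]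
      apply Finset.sum_congr rfl
      intro i _
      ring
    have hzsum : ∑ i ∈ S, z i ^ 2 = ((n : ℝ) - c) := by
      rw [← hcard]
      rw [Finset.sum_congr rfl (fun i _ => hz2 i)]
      simp
    rw [expand, hzsum, ← hT, hν]
    field_simp
    ring
  rw [← h3]
  exact le_trans h1 h2

/-- `h̄⁺`: the first `n - k` entries of `h` sorted in nondecreasing order, followed by
the negatives of the last `k` entries of `h`. -/
noncomputable def barHplus (n k : ℕ) (h : Fin n → ℝ) : Fin n → ℝ := fun i =>
  if hi : (i : ℕ) < n - k then sortLow n k h ⟨i, hi⟩ else -h i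

/-- with `ν = ((h̄⁺)ᵀz - ∑_{i=1}^c h̄⁺ i)/(n - c)`, if `ν ≥ 0` and
`ν ≥ h̄⁺ i` for `1 ≤ i ≤ c`, then
`sup_{w ∈ S_w⁺} hᵀw ≤ sqrt(∑_{i=c+1}^n (h̄⁺ i)² - ((h̄⁺)ᵀz - ∑_{i=1}^c h̄⁺ i)²/(n-c))`,
where `S_w⁺` is the set of unit vectors with nonnegative first `n - k` entries and
`-∑_{i=n-k+1}^n w i ≥ ∑_{i=1}^{n-k} w i`. -/
theorem stmt18 (n k c : ℕ) (hk1 : 1 ≤ k) (hkn : k < n) (hc : c ≤ n - k)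
    (h : Fin n → ℝ)
    (z : Fin n → ℝ) (hz : z = fun i : Fin n => if (i : ℕ) < n - k then (1 : ℝ) else -1)
    (ν : ℝ)
    (hν : ν = ((∑ i, barHplus n k h i * z i) -
      ∑ i ∈ Finset.univ.filter (fun i : Fin n => (i : ℕ) < c), barHplus n k h i) / (n - c))
    (hν0 : 0 ≤ ν)
    (hνge : ∀ i : Fin n, (i : ℕ) < c → barHplus n k h i ≤ ν) :
    sSup {v : ℝ | ∃ w : Fin n → ℝ, (∑ i, (w i) ^ 2 = 1) ∧
        (∀ i : Fin n, (i : ℕ) < n - k → 0 ≤ w i) ∧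
        (∑ i ∈ Finset.univ.filter (fun i : Fin n => (i : ℕ) < n - k), w i ≤
          -∑ i ∈ Finset.univ.filter (fun i : Fin n => n - k ≤ (i : ℕ)), w i) ∧
        v = ∑ i, h i * w i} ≤
      Real.sqrt ((∑ i ∈ Finset.univ.filter (fun i : Fin n => c ≤ (i : ℕ)), (barHplus n k h i) ^ 2) -
        ((∑ i, barHplus n k h i * z i) -
          ∑ i ∈ Finset.univ.filter (fun i : Fin n => (i : ℕ) < c), barHplus n k h i) ^ 2 / (n - c)) := by
  classical
  have hcn : c < n := lt_of_le_of_lt hc (Nat.sub_lt (lt_of_le_of_lt (Nat.zero_le k) hkn) hk1)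
  have hz1 : ∀ i : Fin n, (i : ℕ) < n - k → z i = 1 := by
    intro i hi; rw [hz]; simp [hi]
  have hz2 : ∀ i : Fin n, n - k ≤ (i : ℕ) → z i = -1 := by
    intro i hi; rw [hz]; simp [not_lt.mpr hi]
  have hzsq : ∀ i : Fin n, z i ^ 2 = 1 := by
    intro i
    by_cases hi : (i : ℕ) < n - k
    · rw [hz1 i hi]; norm_num
    · rw [hz2 i (not_lt.mp hi)]; norm_num
  set g : Fin n → ℝ := barHplus n k h with hg
  apply Real.sSup_le _ (Real.sqrt_nonneg _)
  rintro v ⟨w, hw1, hw2, hw3, rfl⟩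
  obtain ⟨τ, hτ⟩ : ∃ τ : Equiv.Perm (Fin (n - k)),
      τ = Tuple.sort (fun j : Fin (n - k) => h (Fin.castLE (Nat.sub_le n k) j)) := ⟨_, rfl⟩
  set u : Fin n → ℝ := fun i =>
    if hi : (i : ℕ) < n - k then w (Fin.castLE (Nat.sub_le n k) (τ ⟨i, hi⟩)) else -w i with hudef
  have hcoe : ∀ j : Fin (n - k), ((Fin.castLE (Nat.sub_le n k) j : Fin n) : ℕ) = (j : ℕ) :=
    fun j => rfl
  have hmk : ∀ (j : Fin (n - k)) (hj : ((Fin.castLE (Nat.sub_le n k) j : Fin n) : ℕ) < n - k),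
      (⟨((Fin.castLE (Nat.sub_le n k) j : Fin n) : ℕ), hj⟩ : Fin (n - k)) = j := by
    intro j hj; apply Fin.ext; rfl
  have hulow : ∀ j : Fin (n - k),
      u (Fin.castLE (Nat.sub_le n k) j) = w (Fin.castLE (Nat.sub_le n k) (τ j)) := by
    intro j
    have hj : ((Fin.castLE (Nat.sub_le n k) j : Fin n) : ℕ) < n - k := j.isLt
    simp only [hudef]
    rw [dif_pos hj, hmk j hj]
  have hglow : ∀ j : Fin (n - k),
      g (Fin.castLE (Nat.sub_le n k) j) = h (Fin.castLE (Nat.sub_le n k) (τ j)) := by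
    intro j
    have hj : ((Fin.castLE (Nat.sub_le n k) j : Fin n) : ℕ) < n - k := j.isLt
    simp only [hg, barHplus]
    rw [dif_pos hj, hmk j hj, hτ]
    rfl
  have huhigh : ∀ i : Fin n, n - k ≤ (i : ℕ) → u i = -w i := by
    intro i hi; simp only [hudef]; rw [dif_neg (not_lt.mpr hi)]
  have hghigh : ∀ i : Fin n, n - k ≤ (i : ℕ) → g i = -h i := by
    intro i hi; simp only [hg, barHplus]; rw [dif_neg (not_lt.mpr hi)]
  -- P1 : the objective values agree
  have P1 : ∑ i, h i * w i = ∑ i, g i * u i := by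
    rw [sum_split (Nat.sub_le n k) (fun i => h i * w i),
      sum_split (Nat.sub_le n k) (fun i => g i * u i)]
    congr 1
    · calc ∑ j : Fin (n - k),
            h (Fin.castLE (Nat.sub_le n k) j) * w (Fin.castLE (Nat.sub_le n k) j)
          = ∑ j : Fin (n - k),
            (fun j => h (Fin.castLE (Nat.sub_le n k) j) * w (Fin.castLE (Nat.sub_le n k) j)) (τ j) :=
            (Equiv.sum_comp τ _).symm
        _ = ∑ j : Fin (n - k),
            g (Fin.castLE (Nat.sub_le n k) j) * u (Fin.castLE (Nat.sub_le n k) j) := by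
            apply Finset.sum_congr rfl
            intro j _
            rw [hglow j, hulow j]
    · apply Finset.sum_congr rfl
      intro i hi
      have hi' : n - k ≤ (i : ℕ) := (Finset.mem_filter.mp hi).2
      rw [huhigh i hi', hghigh i hi']
      ring
  -- total norm of u
  have husum : ∑ i, u i ^ 2 = 1 := by
    rw [sum_split (Nat.sub_le n k) (fun i => u i ^ 2)]
    rw [← hw1, sum_split (Nat.sub_le n k) (fun i => w i ^ 2)]
    congr 1
    · calc ∑ j : Fin (n - k), u (Fin.castLE (Nat.sub_le n k) j) ^ 2
          = ∑ j : Fin (n - k),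
              (fun j => w (Fin.castLE (Nat.sub_le n k) j) ^ 2) (τ j) := by
            apply Finset.sum_congr rfl
            intro j _
            rw [hulow j]
        _ = ∑ j : Fin (n - k), w (Fin.castLE (Nat.sub_le n k) j) ^ 2 :=
            Equiv.sum_comp τ (fun j => w (Fin.castLE (Nat.sub_le n k) j) ^ 2)
    · apply Finset.sum_congr rfl
      intro i hi
      have hi' : n - k ≤ (i : ℕ) := (Finset.mem_filter.mp hi).2
      rw [huhigh i hi']
      ring
  have Phusq : ∑ i ∈ Finset.univ.filter (fun i : Fin n => c ≤ (i : ℕ)), u i ^ 2 ≤ 1 := by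
    rw [← husum]
    exact Finset.sum_le_sum_of_subset_of_nonneg (Finset.filter_subset _ _)
      (fun i _ _ => sq_nonneg _)
  have Pupos : ∀ i : Fin n, (i : ℕ) < c → 0 ≤ u i := by
    intro i hic
    have hi' : (i : ℕ) < n - k := lt_of_lt_of_le hic hc
    simp only [hudef]
    rw [dif_pos hi']
    exact hw2 _ (by simpa using (τ ⟨(i : ℕ), hi'⟩).isLt)
  -- hT
  have PhT : (∑ i, g i * z i) -
      (∑ i ∈ Finset.univ.filter (fun i : Fin n => (i : ℕ) < c), g i)
      = ∑ i ∈ Finset.univ.filter (fun i : Fin n => c ≤ (i : ℕ)), g i * z i := by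
    have hsplitc := Finset.sum_filter_add_sum_filter_not Finset.univ
      (fun i : Fin n => (i : ℕ) < c) (fun i => g i * z i)
    have hlow : ∑ i ∈ Finset.univ.filter (fun i : Fin n => (i : ℕ) < c), g i * z i
        = ∑ i ∈ Finset.univ.filter (fun i : Fin n => (i : ℕ) < c), g i := by
      apply Finset.sum_congr rfl
      intro i hi
      have : (i : ℕ) < c := by simpa using (Finset.mem_filter.mp hi).2
      rw [hz1 i (lt_of_lt_of_le this hc), mul_one]
    have hnotc : Finset.univ.filter (fun i : Fin n => ¬ (i : ℕ) < c)
        = Finset.univ.filter (fun i : Fin n => c ≤ (i : ℕ)) := by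
      simp only [not_lt]
    rw [hnotc, hlow] at hsplitc
    linarith
  -- hcons
  have hlowu : ∑ i ∈ Finset.univ.filter (fun i : Fin n => (i : ℕ) < n - k), u i
      = ∑ i ∈ Finset.univ.filter (fun i : Fin n => (i : ℕ) < n - k), w i := by
    rw [sum_filter_lt (Nat.sub_le n k), sum_filter_lt (Nat.sub_le n k)]
    calc ∑ j : Fin (n - k), u (Fin.castLE (Nat.sub_le n k) j)
        = ∑ j : Fin (n - k), (fun j => w (Fin.castLE (Nat.sub_le n k) j)) (τ j) := by
          apply Finset.sum_congr rfl
          intro j _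
          rw [hulow j]
      _ = ∑ j : Fin (n - k), w (Fin.castLE (Nat.sub_le n k) j) :=
          Equiv.sum_comp τ (fun j => w (Fin.castLE (Nat.sub_le n k) j))
  have hhighu : ∑ i ∈ Finset.univ.filter (fun i : Fin n => n - k ≤ (i : ℕ)), u i
      = -∑ i ∈ Finset.univ.filter (fun i : Fin n => n - k ≤ (i : ℕ)), w i := by
    rw [← Finset.sum_neg_distrib]
    apply Finset.sum_congr rfl
    intro i hi
    exact huhigh i (by simpa using (Finset.mem_filter.mp hi).2)
  have step : ∑ i ∈ Finset.univ.filter (fun i : Fin n => (i : ℕ) < n - k), u i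
      ≤ ∑ i ∈ Finset.univ.filter (fun i : Fin n => n - k ≤ (i : ℕ)), u i := by
    rw [hlowu, hhighu]
    exact hw3
  -- the middle set D
  have e1 : (∑ i ∈ Finset.univ.filter (fun i : Fin n => (i : ℕ) < c), u i)
      + ∑ i ∈ Finset.univ.filter (fun i : Fin n => c ≤ (i : ℕ) ∧ (i : ℕ) < n - k), u i
      = ∑ i ∈ Finset.univ.filter (fun i : Fin n => (i : ℕ) < n - k), u i := by
    have := Finset.sum_filter_add_sum_filter_not
      (Finset.univ.filter (fun i : Fin n => (i : ℕ) < n - k))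
      (fun i : Fin n => (i : ℕ) < c) u
    rw [Finset.filter_filter, Finset.filter_filter] at this
    have hA : Finset.univ.filter (fun i : Fin n => (i : ℕ) < n - k ∧ (i : ℕ) < c)
        = Finset.univ.filter (fun i : Fin n => (i : ℕ) < c) := by
      apply Finset.filter_congr
      intro i _
      constructor
      · exact fun hh => hh.2
      · exact fun hh => ⟨lt_of_lt_of_le hh hc, hh⟩
    have hB : Finset.univ.filter (fun i : Fin n => (i : ℕ) < n - k ∧ ¬ (i : ℕ) < c)
        = Finset.univ.filter (fun i : Fin n => c ≤ (i : ℕ) ∧ (i : ℕ) < n - k) := by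
      apply Finset.filter_congr
      intro i _
      constructor
      · exact fun hh => ⟨not_lt.mp hh.2, hh.1⟩
      · exact fun hh => ⟨hh.2, not_lt.mpr hh.1⟩
    rw [hA, hB] at this
    exact this
  have e2 : ∑ i ∈ Finset.univ.filter (fun i : Fin n => c ≤ (i : ℕ)), z i * u i
      = (∑ i ∈ Finset.univ.filter (fun i : Fin n => c ≤ (i : ℕ) ∧ (i : ℕ) < n - k), u i)
        - ∑ i ∈ Finset.univ.filter (fun i : Fin n => n - k ≤ (i : ℕ)), u i := by
    have := Finset.sum_filter_add_sum_filter_not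
      (Finset.univ.filter (fun i : Fin n => c ≤ (i : ℕ)))
      (fun i : Fin n => (i : ℕ) < n - k) (fun i => z i * u i)
    rw [Finset.filter_filter, Finset.filter_filter] at this
    have hB : Finset.univ.filter (fun i : Fin n => c ≤ (i : ℕ) ∧ ¬ (i : ℕ) < n - k)
        = Finset.univ.filter (fun i : Fin n => n - k ≤ (i : ℕ)) := by
      apply Finset.filter_congr
      intro i _
      constructor
      · exact fun hh => not_lt.mp hh.2
      · exact fun hh => ⟨le_trans hc hh, not_lt.mpr hh⟩
    rw [hB] at this
    have hfirst : ∑ i ∈ Finset.univ.filter (fun i : Fin n => c ≤ (i : ℕ) ∧ (i : ℕ) < n - k),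
        z i * u i
        = ∑ i ∈ Finset.univ.filter (fun i : Fin n => c ≤ (i : ℕ) ∧ (i : ℕ) < n - k), u i := by
      apply Finset.sum_congr rfl
      intro i hi
      have : (i : ℕ) < n - k := by
        have := (Finset.mem_filter.mp hi).2
        simpa using this.2
      rw [hz1 i this, one_mul]
    have hsecond : ∑ i ∈ Finset.univ.filter (fun i : Fin n => n - k ≤ (i : ℕ)), z i * u i
        = -∑ i ∈ Finset.univ.filter (fun i : Fin n => n - k ≤ (i : ℕ)), u i := by
      rw [← Finset.sum_neg_distrib]
      apply Finset.sum_congr rfl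
      intro i hi
      have : n - k ≤ (i : ℕ) := by simpa using (Finset.mem_filter.mp hi).2
      rw [hz2 i this]
      ring
    rw [hfirst, hsecond] at this
    linarith
  have Phcons : ∑ i ∈ Finset.univ.filter (fun i : Fin n => (i : ℕ) < c), u i ≤
      - ∑ i ∈ Finset.univ.filter (fun i : Fin n => c ≤ (i : ℕ)), z i * u i := by
    rw [e2]
    linarith
  rw [P1]
  exact key n c hcn g u z hzsq _ ν PhT hν hν0 hνge Pupos Phusq Phcons
end
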